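/- arXiv:2312.12129 — 6 statements merged into one kernel-verified Lean document; each statement's English description precedes it below -/
import Mathlib

section
/- Let K = ℚ[a,d]/(a² + a + 1, d² + 1). The ℚ-linear trace map Tr: K → ℚ sends α + βa + γd + δad to 4α - 2β (equivalently, the trace of multiplication by an element of K). The symmetric ℚ-bilinear form (z,w) ↦ Tr(2 a d z w) on the 4-dimensional ℚ-vector space K is nondegenerate and its class in GW(ℚ) is 2ℍ = 2(⟨1⟩ + ⟨-1⟩). -/
/-!
In the basis `1, a, d, ad` multiplication only involves `a² = -a - 1` and `d² = -1`, and reading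
off the diagonal of the multiplication matrices gives `Tr (x + y a + u d + v ad) = 4x - 2y`.
Hence `Tr (2ad z w) = 4 (x (u' + v') + (u + v) x') + 4 (y (u' - 2v') + (u - 2v) y')`: two
hyperbolic planes, in the coordinates `(x, u + v)` and `(y, u - 2v)`. This change of coordinates
has determinant `-3`, so over `ℚ` the form is isometric to `2ℍ`, and in particular nondegenerate.
-/

open Polynomial

namespace Zeta3I

section Hyperbolic

variable {R : Type*} [CommRing R]

def twoHyperbolicForm (c c' : Fin 2 × Fin 2 → R) : R :=
  ∑ m : Fin 2, (c (m, 0) * c' (m, 0) - c (m, 1) * c' (m, 1))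

theorem eq_zero_of_forall_twoHyperbolicForm_eq_zero {c : Fin 2 × Fin 2 → R}
    (h : ∀ c', twoHyperbolicForm c c' = 0) : c = 0 := by
  funext ⟨m, j⟩
  have := h (Pi.single (m, j) 1)
  fin_cases j <;> fin_cases m <;> simpa [twoHyperbolicForm, Pi.single_apply] using this

theorem eq_zero_of_forall_twoHyperbolicForm_linearEquiv_eq_zero {M : Type*} [AddCommGroup M]
    [Module R M] (e : M ≃ₗ[R] (Fin 2 × Fin 2 → R)) {z : M}
    (h : ∀ w, twoHyperbolicForm (e z) (e w) = 0) : z = 0 :=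
  e.map_eq_zero_iff.1 <| eq_zero_of_forall_twoHyperbolicForm_eq_zero fun c' => by
    simpa using h (e.symm c')

/-- With `c (i, j)` the coefficient of `a ^ i * d ^ j`, i.e. `c = (x, u; y, v)`, this uses
`4 (p q' + q p') = (p + 2q) (p' + 2q') - (p - 2q) (p' - 2q')` for `(p, q) = (x, u + v)` and
`(p, q) = (y, u - 2v)`. -/
def hyperbolicCoords (c : Fin 2 × Fin 2 → R) : Fin 2 × Fin 2 → R := fun p =>
  ![![c (0, 0) + 2 * (c (0, 1) + c (1, 1)), c (0, 0) - 2 * (c (0, 1) + c (1, 1))],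
    ![c (1, 0) + 2 * (c (0, 1) - 2 * c (1, 1)), c (1, 0) - 2 * (c (0, 1) - 2 * c (1, 1))]] p.1 p.2

variable {F : Type*} [Field F]

/-- The denominator `12 = 4 · 3` comes from the factor `4` in the hyperbolic splitting and the
determinant `-3` of `(u, v) ↦ (u + v, u - 2v)`. -/
def hyperbolicCoordsEquiv (h12 : (12 : F) ≠ 0) :
    (Fin 2 × Fin 2 → F) ≃ₗ[F] (Fin 2 × Fin 2 → F) where
  toFun := hyperbolicCoords
  invFun c := fun p =>
    ![![6 * (c (0, 0) + c (0, 1)) / 12,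
        (2 * (c (0, 0) - c (0, 1)) + (c (1, 0) - c (1, 1))) / 12],
      ![6 * (c (1, 0) + c (1, 1)) / 12,
        ((c (0, 0) - c (0, 1)) - (c (1, 0) - c (1, 1))) / 12]] p.1 p.2
  left_inv c := by
    funext ⟨i, j⟩
    fin_cases i <;> fin_cases j <;>
      simp only [hyperbolicCoords, Matrix.cons_val', Matrix.cons_val_zero,
        Matrix.cons_val_one, Matrix.cons_val_fin_one, Fin.zero_eta, Fin.mk_one] <;>
      field_simp <;> ring
  right_inv c := by
    funext ⟨i, j⟩
    fin_cases i <;> fin_cases j <;>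
      simp only [hyperbolicCoords, Matrix.cons_val', Matrix.cons_val_zero,
        Matrix.cons_val_one, Matrix.cons_val_fin_one, Fin.zero_eta, Fin.mk_one] <;>
      field_simp <;> ring
  map_add' c c' := by
    funext ⟨i, j⟩
    fin_cases i <;> fin_cases j <;>
      simp only [hyperbolicCoords, Matrix.cons_val', Matrix.cons_val_zero,
        Matrix.cons_val_one, Matrix.cons_val_fin_one, Fin.zero_eta, Fin.mk_one, Pi.add_apply] <;>
      ring
  map_smul' r c := by
    funext ⟨i, j⟩
    fin_cases i <;> fin_cases j <;>
      simp only [hyperbolicCoords, Matrix.cons_val', Matrix.cons_val_zero,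
        Matrix.cons_val_one, Matrix.cons_val_fin_one, Fin.zero_eta, Fin.mk_one, Pi.smul_apply,
        smul_eq_mul, RingHom.id_apply] <;>
      ring

end Hyperbolic

section Coordinates

variable {R K : Type*} [CommRing R] [CommRing K] [Algebra R K]

def ofCoords (a d : K) (x y u v : R) : K :=
  algebraMap R K x + algebraMap R K y * a + algebraMap R K u * d + algebraMap R K v * (a * d)

variable {a d : K}

theorem ofCoords_mul_ofCoords (ha : a ^ 2 + a + 1 = 0) (hd : d ^ 2 + 1 = 0)
    (x y u v x' y' u' v' : R) :
    ofCoords a d x y u v * ofCoords a d x' y' u' v' =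
      ofCoords a d (x * x' - y * y' - u * u' + v * v')
        (x * y' + y * x' - y * y' - u * v' - v * u' + v * v')
        (x * u' + u * x' - y * v' - v * y')
        (x * v' + y * u' + u * y' + v * x' - y * v' - v * y') := by
  simp only [ofCoords, map_add, map_sub, map_mul]
  set φ := algebraMap R K
  linear_combination (φ y * φ y' - φ v * φ v' + d * (φ v * φ y' + φ y * φ v')) * ha +
    (φ u * φ u' + a * (φ v * φ u' + φ u * φ v') + a ^ 2 * (φ v * φ v')) * hd

variable (b : Module.Basis (Fin 2 × Fin 2) R K)
  (hb : ∀ i j : Fin 2, b (i, j) = a ^ (i : ℕ) * d ^ (j : ℕ))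
include hb

theorem ofCoords_eq_sum (x y u v : R) :
    ofCoords a d x y u v = x • b (0, 0) + y • b (1, 0) + u • b (0, 1) + v • b (1, 1) := by
  simp [hb, ofCoords, Algebra.smul_def]

theorem repr_ofCoords (x y u v : R) (i j : Fin 2) :
    b.repr (ofCoords a d x y u v) (i, j) = ![![x, u], ![y, v]] i j := by
  rw [ofCoords_eq_sum b hb]
  fin_cases i <;> fin_cases j <;> simp

theorem ofCoords_repr (z : K) :
    ofCoords a d (b.repr z (0, 0)) (b.repr z (1, 0)) (b.repr z (0, 1)) (b.repr z (1, 1)) = z := by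
  refine b.ext_elem fun ⟨i, j⟩ => ?_
  rw [repr_ofCoords b hb]
  fin_cases i <;> fin_cases j <;> rfl

theorem trace_ofCoords (ha : a ^ 2 + a + 1 = 0) (hd : d ^ 2 + 1 = 0) (x y u v : R) :
    Algebra.trace R K (ofCoords a d x y u v) = 4 * x - 2 * y := by
  have h00 : b (0, 0) = ofCoords a d (1 : R) 0 0 0 := by simp [ofCoords_eq_sum b hb]
  have h10 : b (1, 0) = ofCoords a d (0 : R) 1 0 0 := by simp [ofCoords_eq_sum b hb]
  have h01 : b (0, 1) = ofCoords a d (0 : R) 0 1 0 := by simp [ofCoords_eq_sum b hb]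
  have h11 : b (1, 1) = ofCoords a d (0 : R) 0 0 1 := by simp [ofCoords_eq_sum b hb]
  rw [Algebra.trace_eq_matrix_trace b, Matrix.trace, Fintype.sum_prod_type]
  simp only [Matrix.diag_apply, Fin.sum_univ_two, Algebra.leftMulMatrix_eq_repr_mul,
    h00, h10, h01, h11, ofCoords_mul_ofCoords ha hd, repr_ofCoords b hb, mul_one, mul_zero,
    sub_zero, add_zero, zero_add, sub_self, zero_sub, Matrix.cons_val', Matrix.cons_val_zero,
    Matrix.cons_val_one, Matrix.cons_val_fin_one]
  ring

theorem trace_two_mul_mul_ofCoords (ha : a ^ 2 + a + 1 = 0) (hd : d ^ 2 + 1 = 0)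
    (x y u v x' y' u' v' : R) :
    Algebra.trace R K (2 * a * d * ofCoords a d x y u v * ofCoords a d x' y' u' v') =
      4 * (x * (u' + v') + (u + v) * x') + 4 * (y * (u' - 2 * v') + (u - 2 * v) * y') := by
  have h2ad : 2 * a * d = ofCoords a d (0 : R) 0 0 2 := by
    simp only [ofCoords, map_zero, map_ofNat, zero_mul, add_zero, zero_add]
    ring
  rw [h2ad, ofCoords_mul_ofCoords ha hd, ofCoords_mul_ofCoords ha hd, trace_ofCoords b hb ha hd]
  ring

theorem trace_two_mul_mul_eq_twoHyperbolicForm (ha : a ^ 2 + a + 1 = 0) (hd : d ^ 2 + 1 = 0)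
    (z w : K) :
    Algebra.trace R K (2 * a * d * z * w) =
      twoHyperbolicForm (hyperbolicCoords (b.equivFun z)) (hyperbolicCoords (b.equivFun w)) := by
  conv_lhs => rw [← ofCoords_repr b hb z, ← ofCoords_repr b hb w]
  rw [trace_two_mul_mul_ofCoords b hb ha hd]
  simp only [twoHyperbolicForm, hyperbolicCoords, Module.Basis.equivFun_apply, Matrix.cons_val',
    Matrix.cons_val_zero, Matrix.cons_val_one, Matrix.cons_val_fin_one, Fin.sum_univ_two]
  ring

end Coordinates

section AdjoinRootTower

variable {R : Type*} [CommRing R] {g : R[X]} {h : (AdjoinRoot g)[X]} {m n : ℕ}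

noncomputable def towerBasis (hg : g.Monic) (hgm : g.natDegree = m) (hh : h.Monic)
    (hhn : h.natDegree = n) :
    Module.Basis (Fin m × Fin n) R (AdjoinRoot h) :=
  ((AdjoinRoot.powerBasis' hg).basis.reindex (finCongr hgm)).smulTower
    ((AdjoinRoot.powerBasis' hh).basis.reindex (finCongr hhn))

theorem towerBasis_apply (hg : g.Monic) (hgm : g.natDegree = m) (hh : h.Monic)
    (hhn : h.natDegree = n) (i : Fin m) (j : Fin n) :
    towerBasis hg hgm hh hhn (i, j) =
      algebraMap (AdjoinRoot g) (AdjoinRoot h) (AdjoinRoot.root g) ^ (i : ℕ) *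
        AdjoinRoot.root h ^ (j : ℕ) := by
  simp only [towerBasis, Module.Basis.smulTower_apply, Module.Basis.coe_reindex,
    PowerBasis.coe_basis, AdjoinRoot.powerBasis'_gen, Function.comp_apply, Algebra.smul_def,
    AdjoinRoot.algebraMap_eq, map_pow]
  rfl

end AdjoinRootTower

end Zeta3I

open Zeta3I

/-- Let `K = ℚ[a,d]/(a² + a + 1, d² + 1)`, realized as `ℚ` with a root `a` of
`X² + X + 1` adjoined, followed by a root `d` of `X² + 1`. The `ℚ`-linear trace
map `Tr : K → ℚ` sends `α + βa + γd + δad` to `4α - 2β`. The symmetric `ℚ`-bilinear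
form `(z, w) ↦ Tr(2 a d z w)` on the 4-dimensional `ℚ`-vector space `K` is
nondegenerate and its class in `GW(ℚ)` is `2ℍ = 2(⟨1⟩ + ⟨-1⟩)`, i.e. it is isometric
to the sum of two hyperbolic planes. -/
theorem stmt_5 :
    let K₁ := AdjoinRoot (X ^ 2 + X + 1 : Polynomial ℚ)
    let K := AdjoinRoot (X ^ 2 + 1 : Polynomial K₁)
    let a : K := algebraMap K₁ K (AdjoinRoot.root _)
    let d : K := AdjoinRoot.root _
    (∀ α β γ δ : ℚ,
        Algebra.trace ℚ K (algebraMap ℚ K α + algebraMap ℚ K β * a +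
          algebraMap ℚ K γ * d + algebraMap ℚ K δ * (a * d)) = 4 * α - 2 * β) ∧
    (∀ z : K, (∀ w : K, Algebra.trace ℚ K (2 * a * d * z * w) = 0) → z = 0) ∧
    ∃ e : K ≃ₗ[ℚ] (Fin 2 × Fin 2 → ℚ), ∀ z w : K,
      Algebra.trace ℚ K (2 * a * d * z * w) =
        ∑ m : Fin 2, (e z (m, 0) * e w (m, 0) - e z (m, 1) * e w (m, 1)) := by
  intro K₁ K a d
  have hdeg₁ : (X ^ 2 + X + 1 : ℚ[X]).natDegree = 2 := by compute_degree!
  have : Nontrivial K₁ :=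
    AdjoinRoot.nontrivial _ (degree_ne_of_natDegree_ne (by rw [hdeg₁]; norm_num))
  have hdeg₂ : (X ^ 2 + 1 : K₁[X]).natDegree = 2 := by compute_degree!
  have ha : a ^ 2 + a + 1 = 0 := by
    simpa only [eval₂_add, eval₂_pow, eval₂_X, eval₂_one, map_add, map_pow, map_one, map_zero]
      using congrArg (algebraMap K₁ K) (AdjoinRoot.eval₂_root (X ^ 2 + X + 1 : ℚ[X]))
  have hd : d ^ 2 + 1 = 0 := by
    have h := AdjoinRoot.eval₂_root (X ^ 2 + 1 : K₁[X])
    simp only [eval₂_add, eval₂_pow, eval₂_X, eval₂_one] at h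
    exact h
  let b := towerBasis (by monicity!) hdeg₁ (by monicity!) hdeg₂
  have hb : ∀ i j : Fin 2, b (i, j) = a ^ (i : ℕ) * d ^ (j : ℕ) := towerBasis_apply _ _ _ _
  let e := b.equivFun.trans (hyperbolicCoordsEquiv (by norm_num : (12 : ℚ) ≠ 0))
  have he : ∀ z w : K, Algebra.trace ℚ K (2 * a * d * z * w) = twoHyperbolicForm (e z) (e w) :=
    trace_two_mul_mul_eq_twoHyperbolicForm b hb ha hd
  refine ⟨trace_ofCoords b hb ha hd, fun z hz => ?_, e, he⟩
  exact eq_zero_of_forall_twoHyperbolicForm_linearEquiv_eq_zero e fun w => he z w ▸ hz w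
end

section
/- Let d ≥ n ≥ 1 be integers and k a field. The local ring ℚuotient R = k[w₁,...,wₙ, z₀]/(C(d,1)z₀^{d-1} + w₁, C(d,2)z₀^{d-2} + w₂², ..., C(d,n)z₀^{d-n} + wₙⁿ, z₀^d) is a finite-dimensional k-algebra of dimension d·n! over k. -/
/-!
The relation `z₀ ^ d = 0` involves `z₀` alone, and every other relation has the form
`wᵢ ^ i = cᵢ(z₀)`. Eliminating `z₀` therefore presents `R` as `A[w₁, …, wₙ] / (wᵢ ^ i - cᵢ)` over
`A = k[z₀] / (z₀ ^ d)`, which has dimension `d`. Adjoining the variables one at a time, each step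
adjoins a root of the monic polynomial `X ^ i - cᵢ` and multiplies the dimension by `i`.
-/

open MvPolynomial
open scoped Polynomial

theorem Polynomial.Monic.finrank_adjoinRoot {B : Type*} [CommRing B] (k : Type*) [Field k]
    [Algebra k B] [Module.Finite k B] {f : B[X]} (hf : f.Monic) :
    Module.finrank k (AdjoinRoot f) = Module.finrank k B * f.natDegree := by
  rw [Module.finrank_eq_card_basis
    ((Module.finBasis k B).smulTower (AdjoinRoot.powerBasis' hf).basis)]
  simp

theorem finrank_adjoinRoot_X_pow_sub_C {B : Type*} [CommRing B] (k : Type*) [Field k]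
    [Algebra k B] [Module.Finite k B] {n : ℕ} (hn : n ≠ 0) (b : B) :
    Module.finrank k (AdjoinRoot (Polynomial.X ^ n - Polynomial.C b)) =
      Module.finrank k B * n := by
  cases subsingleton_or_nontrivial B
  · have : Subsingleton (AdjoinRoot (Polynomial.X ^ n - Polynomial.C b)) :=
      Function.Surjective.subsingleton AdjoinRoot.mk_surjective
    simp [Module.finrank_zero_of_subsingleton]
  rw [(Polynomial.monic_X_pow_sub_C b hn).finrank_adjoinRoot k, Polynomial.natDegree_X_pow_sub_C]

noncomputable section

namespace LastVariable

variable {B : Type*} [CommRing B] {m : ℕ} (q : B[X]) (e : Fin m → ℕ) (p : Fin m → B[X])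

def relations : Fin (m + 1) → MvPolynomial (Fin (m + 1)) B :=
  Fin.lastCases (Polynomial.aeval (X (Fin.last m)) q)
    fun i => X i.castSucc ^ e i - Polynomial.aeval (X (Fin.last m)) (p i)

def rootRelations : Fin m → MvPolynomial (Fin m) (AdjoinRoot q) :=
  fun i => X i ^ e i - C (AdjoinRoot.mk q (p i))

def evalAtRoot : MvPolynomial (Fin (m + 1)) B →ₐ[B] MvPolynomial (Fin m) (AdjoinRoot q) :=
  aeval (Fin.lastCases (C (AdjoinRoot.root q)) X)

@[simp]
theorem evalAtRoot_X_castSucc (i : Fin m) : evalAtRoot q (X i.castSucc) = X i := by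
  simp [evalAtRoot]

theorem evalAtRoot_aeval_X_last (r : B[X]) :
    evalAtRoot q (Polynomial.aeval (X (Fin.last m)) r) = C (AdjoinRoot.mk q r) := by
  rw [← Polynomial.aeval_algHom_apply, evalAtRoot, aeval_X, Fin.lastCases_last,
    ← algebraMap_eq, Polynomial.aeval_algebraMap_apply, AdjoinRoot.aeval_eq]

theorem evalAtRoot_relations_last : evalAtRoot q (relations q e p (Fin.last m)) = 0 := by
  simp [relations, evalAtRoot_aeval_X_last, AdjoinRoot.mk_self]

theorem evalAtRoot_relations_castSucc (i : Fin m) :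
    evalAtRoot q (relations q e p i.castSucc) = rootRelations q e p i := by
  simp [relations, rootRelations, evalAtRoot_aeval_X_last]

theorem span_relations_le_comap :
    Ideal.span (Set.range (relations q e p)) ≤
      (Ideal.span (Set.range (rootRelations q e p))).comap (evalAtRoot q) := by
  rw [Ideal.span_le]
  rintro _ ⟨j, rfl⟩
  induction j using Fin.lastCases with
  | last => simp [evalAtRoot_relations_last]
  | cast i =>
    rw [SetLike.mem_coe, Ideal.mem_comap, evalAtRoot_relations_castSucc]
    exact Ideal.subset_span ⟨i, rfl⟩

def rootToLast : AdjoinRoot q →ₐ[B]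
    MvPolynomial (Fin (m + 1)) B ⧸ Ideal.span (Set.range (relations q e p)) :=
  AdjoinRoot.liftAlgHom q (Algebra.ofId B _) (Ideal.Quotient.mk _ (X (Fin.last m))) <| by
    rw [Algebra.toRingHom_ofId, ← Polynomial.aeval_def, ← Ideal.Quotient.mkₐ_eq_mk B,
      Polynomial.aeval_algHom_apply, Ideal.Quotient.mkₐ_eq_mk,
      Ideal.Quotient.eq_zero_iff_mem]
    exact Ideal.subset_span ⟨Fin.last m, by simp [relations]⟩

theorem rootToLast_mk (r : B[X]) :
    rootToLast q e p (AdjoinRoot.mk q r) =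
      Ideal.Quotient.mk _ (Polynomial.aeval (X (Fin.last m)) r) := by
  rw [rootToLast, AdjoinRoot.liftAlgHom_mk, Algebra.toRingHom_ofId, ← Polynomial.aeval_def,
    ← Ideal.Quotient.mkₐ_eq_mk B, Polynomial.aeval_algHom_apply]

def liftRoot : MvPolynomial (Fin m) (AdjoinRoot q) →ₐ[B]
    MvPolynomial (Fin (m + 1)) B ⧸ Ideal.span (Set.range (relations q e p)) :=
  aevalTower (rootToLast q e p) fun i => Ideal.Quotient.mk _ (X i.castSucc)

theorem liftRoot_rootRelations (i : Fin m) : liftRoot q e p (rootRelations q e p i) = 0 := by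
  rw [rootRelations, map_sub, map_pow, liftRoot, aevalTower_X, aevalTower_C, rootToLast_mk,
    ← map_pow, ← map_sub, Ideal.Quotient.eq_zero_iff_mem]
  exact Ideal.subset_span ⟨i.castSucc, by simp [relations]⟩

def toRoot :
    (MvPolynomial (Fin (m + 1)) B ⧸ Ideal.span (Set.range (relations q e p))) →ₐ[B]
      MvPolynomial (Fin m) (AdjoinRoot q) ⧸ Ideal.span (Set.range (rootRelations q e p)) :=
  Ideal.quotientMapₐ _ (evalAtRoot q) (span_relations_le_comap q e p)

def ofRoot :
    (MvPolynomial (Fin m) (AdjoinRoot q) ⧸ Ideal.span (Set.range (rootRelations q e p))) →ₐ[B]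
      MvPolynomial (Fin (m + 1)) B ⧸ Ideal.span (Set.range (relations q e p)) :=
  Ideal.Quotient.liftₐ _ (liftRoot q e p) fun a ha => by
    refine (Ideal.span_le (I := RingHom.ker (liftRoot q e p))).2 ?_ ha
    rintro _ ⟨i, rfl⟩
    exact liftRoot_rootRelations q e p i

@[simp]
theorem toRoot_mk (x : MvPolynomial (Fin (m + 1)) B) :
    toRoot q e p (Ideal.Quotient.mk _ x) = Ideal.Quotient.mk _ (evalAtRoot q x) := rfl

@[simp]
theorem ofRoot_mk (x : MvPolynomial (Fin m) (AdjoinRoot q)) :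
    ofRoot q e p (Ideal.Quotient.mk _ x) = liftRoot q e p x := rfl

def quotientEquiv :
    (MvPolynomial (Fin (m + 1)) B ⧸ Ideal.span (Set.range (relations q e p))) ≃ₐ[B]
      MvPolynomial (Fin m) (AdjoinRoot q) ⧸ Ideal.span (Set.range (rootRelations q e p)) :=
  AlgEquiv.ofAlgHom (toRoot q e p) (ofRoot q e p)
    (by
      apply Ideal.Quotient.algHom_ext
      apply MvPolynomial.algHom_ext'
      · apply AdjoinRoot.algHom_ext
        simp [liftRoot, rootToLast, evalAtRoot]
      · intro i
        simp [liftRoot, evalAtRoot])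
    (by
      apply Ideal.Quotient.algHom_ext
      apply MvPolynomial.algHom_ext
      intro j
      induction j using Fin.lastCases with
      | last => simp [liftRoot, rootToLast, evalAtRoot]
      | cast i => simp [liftRoot, evalAtRoot])

theorem finrank_quotient (k : Type*) [CommSemiring k] [Algebra k B] :
    Module.finrank k (MvPolynomial (Fin (m + 1)) B ⧸ Ideal.span (Set.range (relations q e p))) =
      Module.finrank k (MvPolynomial (Fin m) (AdjoinRoot q) ⧸
        Ideal.span (Set.range fun i => X i ^ e i - C (AdjoinRoot.mk q (p i)))) :=
  ((quotientEquiv q e p).restrictScalars k).toLinearEquiv.finrank_eq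

end LastVariable

end

theorem finrank_quotient_span_X_pow_sub_C (k : Type*) [Field k] {B : Type*} [CommRing B]
    [Algebra k B] [Module.Finite k B] {m : ℕ} (e : Fin m → ℕ) (he : ∀ i, e i ≠ 0)
    (b : Fin m → B) :
    Module.finrank k
        (MvPolynomial (Fin m) B ⧸ Ideal.span (Set.range fun i => X i ^ e i - C (b i))) =
      Module.finrank k B * ∏ i, e i := by
  induction m generalizing B with
  | zero =>
    rw [Set.range_eq_empty, Ideal.span_empty, Finset.univ_eq_empty, Finset.prod_empty, mul_one,
      ((AlgEquiv.quotientBot k _).trans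
        ((isEmptyAlgEquiv B (Fin 0)).restrictScalars k)).toLinearEquiv.finrank_eq]
  | succ m ih =>
    set q : B[X] := Polynomial.X ^ e (Fin.last m) - Polynomial.C (b (Fin.last m))
    have hq : q.Monic := Polynomial.monic_X_pow_sub_C _ (he _)
    have : Module.Finite B (AdjoinRoot q) := hq.finite_adjoinRoot
    have : Module.Finite k (AdjoinRoot q) := .trans B _
    have hrel : (fun i => X i ^ e i - C (b i)) =
        LastVariable.relations q (fun i => e i.castSucc) fun i => Polynomial.C (b i.castSucc) := by
      funext j
      induction j using Fin.lastCases with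
      | last => simp [LastVariable.relations, q]
      | cast i => simp [LastVariable.relations]
    rw [hrel, LastVariable.finrank_quotient (k := k), ih _ fun i => he _,
      finrank_adjoinRoot_X_pow_sub_C k (he _), Fin.prod_univ_castSucc]
    ring

theorem stmt_7_general (k : Type) [Field k] (n d : ℕ) :
    let z : MvPolynomial (Fin (n + 1)) k := X (Fin.last n)
    let g : Fin (n + 1) → MvPolynomial (Fin (n + 1)) k := fun i =>
      if hi : (i : ℕ) < n then
        C ((d.choose ((i : ℕ) + 1) : ℕ) : k) * z ^ (d - ((i : ℕ) + 1)) +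
          X i ^ ((i : ℕ) + 1)
      else z ^ d
    Module.finrank k
      (MvPolynomial (Fin (n + 1)) k ⧸ Ideal.span (Set.range g)) = d * n.factorial := by
  intro z g
  let p : Fin n → k[X] := fun i =>
    -(Polynomial.C ((d.choose ((i : ℕ) + 1) : ℕ) : k) * Polynomial.X ^ (d - ((i : ℕ) + 1)))
  have hg : g = LastVariable.relations (Polynomial.X ^ d) (fun i => (i : ℕ) + 1) p := by
    funext j
    induction j using Fin.lastCases with
    | last => simp [g, z, LastVariable.relations]
    | cast i => simp [g, z, p, LastVariable.relations, add_comm]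
  have : Module.Finite k (AdjoinRoot (Polynomial.X ^ d : k[X])) :=
    (Polynomial.monic_X_pow d).finite_adjoinRoot
  rw [hg, LastVariable.finrank_quotient (k := k),
    finrank_quotient_span_X_pow_sub_C k _ fun i => Nat.succ_ne_zero _,
    (Polynomial.monic_X_pow d).finrank_adjoinRoot k, Module.finrank_self, one_mul,
    Polynomial.natDegree_X_pow, Fin.prod_univ_eq_prod_range (· + 1),
    Finset.prod_range_add_one_eq_factorial]

/-- Let `d ≥ n ≥ 1` be integers and `k` a field with `char k = 0` or `char k > d`.
The quotient `R = k[w₁,…,wₙ,z₀]/(C(d,1)z₀^{d-1} + w₁, C(d,2)z₀^{d-2} + w₂², …,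
C(d,n)z₀^{d-n} + wₙⁿ, z₀^d)` is a finite-dimensional `k`-algebra of dimension
`d · n!` over `k`. Here the variable `X i` for `i < n` plays the role of `w_{i+1}`
and `X (Fin.last n)` plays the role of `z₀`. -/
theorem stmt_7 (k : Type) [Field k] (n d : ℕ) (hn : 1 ≤ n) (hnd : n ≤ d)
    (hchar : CharZero k ∨ d < ringChar k) :
    let z : MvPolynomial (Fin (n + 1)) k := X (Fin.last n)
    let g : Fin (n + 1) → MvPolynomial (Fin (n + 1)) k := fun i =>
      if hi : (i : ℕ) < n then
        C ((d.choose ((i : ℕ) + 1) : ℕ) : k) * z ^ (d - ((i : ℕ) + 1)) +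
          X i ^ ((i : ℕ) + 1)
      else z ^ d
    Module.finrank k
      (MvPolynomial (Fin (n + 1)) k ⧸ Ideal.span (Set.range g)) = d * n.factorial :=
  stmt_7_general k n d
end

section
/- Over ℚ, the ideal (1 + c³ - c² - a³, 3c²d - 3a²b - 2cd, 1 - 3ab² + 3cd² - d², λ, c + dλ) in ℚ[a,b,c,d,λ] equals the ideal (a³ - 1, b, c, d² - 1, λ). -/
open MvPolynomial

/-- Over `ℚ`, the ideal `(1 + c³ - c² - a³, 3c²d - 3a²b - 2cd, 1 - 3ab² + 3cd² - d²,
λ, c + dλ)` in `ℚ[a,b,c,d,λ]` equals the ideal `(a³ - 1, b, c, d² - 1, λ)`.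
Here `a = X 0`, `b = X 1`, `c = X 2`, `d = X 3`, `λ = X 4`. -/
theorem stmt_9 :
    let a : MvPolynomial (Fin 5) ℚ := X 0
    let b : MvPolynomial (Fin 5) ℚ := X 1
    let c : MvPolynomial (Fin 5) ℚ := X 2
    let d : MvPolynomial (Fin 5) ℚ := X 3
    let l : MvPolynomial (Fin 5) ℚ := X 4
    Ideal.span {1 + c ^ 3 - c ^ 2 - a ^ 3,
        3 * c ^ 2 * d - 3 * a ^ 2 * b - 2 * c * d,
        1 - 3 * a * b ^ 2 + 3 * c * d ^ 2 - d ^ 2,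
        l, c + d * l} =
      Ideal.span {a ^ 3 - 1, b, c, d ^ 2 - 1, l} := by
  intro a b c d l
  apply le_antisymm
  · rw [Ideal.span_le]
    have hA : a ^ 3 - 1 ∈ Ideal.span {a ^ 3 - 1, b, c, d ^ 2 - 1, l} :=
      Ideal.subset_span (by simp)
    have hB : b ∈ Ideal.span {a ^ 3 - 1, b, c, d ^ 2 - 1, l} :=
      Ideal.subset_span (by simp)
    have hC : c ∈ Ideal.span {a ^ 3 - 1, b, c, d ^ 2 - 1, l} :=
      Ideal.subset_span (by simp)
    have hD : d ^ 2 - 1 ∈ Ideal.span {a ^ 3 - 1, b, c, d ^ 2 - 1, l} :=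
      Ideal.subset_span (by simp)
    have hL : l ∈ Ideal.span {a ^ 3 - 1, b, c, d ^ 2 - 1, l} :=
      Ideal.subset_span (by simp)
    intro x hx
    simp only [Set.mem_insert_iff, Set.mem_singleton_iff] at hx
    rcases hx with rfl | rfl | rfl | rfl | rfl
    · rw [show 1 + c ^ 3 - c ^ 2 - a ^ 3 = (c ^ 2 - c) * c - (a ^ 3 - 1) by ring]
      exact sub_mem (Ideal.mul_mem_left _ _ hC) hA
    · rw [show 3 * c ^ 2 * d - 3 * a ^ 2 * b - 2 * c * d =
        (3 * c * d - 2 * d) * c - (3 * a ^ 2) * b by ring]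
      exact sub_mem (Ideal.mul_mem_left _ _ hC) (Ideal.mul_mem_left _ _ hB)
    · rw [show 1 - 3 * a * b ^ 2 + 3 * c * d ^ 2 - d ^ 2 =
        (-(3 * a * b)) * b + (3 * d ^ 2) * c - (d ^ 2 - 1) by ring]
      exact sub_mem (add_mem (Ideal.mul_mem_left _ _ hB) (Ideal.mul_mem_left _ _ hC)) hD
    · exact hL
    · rw [show c + d * l = c + d * l by ring]
      exact add_mem hC (Ideal.mul_mem_left _ _ hL)
  · rw [Ideal.span_le]
    set I := Ideal.span ({1 + c ^ 3 - c ^ 2 - a ^ 3,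
        3 * c ^ 2 * d - 3 * a ^ 2 * b - 2 * c * d,
        1 - 3 * a * b ^ 2 + 3 * c * d ^ 2 - d ^ 2,
        l, c + d * l} : Set (MvPolynomial (Fin 5) ℚ)) with hI
    have h1 : 1 + c ^ 3 - c ^ 2 - a ^ 3 ∈ I := Ideal.subset_span (by simp)
    have h2 : 3 * c ^ 2 * d - 3 * a ^ 2 * b - 2 * c * d ∈ I := Ideal.subset_span (by simp)
    have h3 : 1 - 3 * a * b ^ 2 + 3 * c * d ^ 2 - d ^ 2 ∈ I := Ideal.subset_span (by simp)
    have h4 : l ∈ I := Ideal.subset_span (by simp)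
    have h5 : c + d * l ∈ I := Ideal.subset_span (by simp)
    have hc : c ∈ I := by
      rw [show c = (c + d * l) - d * l by ring]
      exact sub_mem h5 (Ideal.mul_mem_left _ _ h4)
    have ha : a ^ 3 - 1 ∈ I := by
      rw [show a ^ 3 - 1 = (c ^ 2 - c) * c - (1 + c ^ 3 - c ^ 2 - a ^ 3) by ring]
      exact sub_mem (Ideal.mul_mem_left _ _ hc) h1
    have hb : b ∈ I := by
      have h3b : 3 * b ∈ I := by
        rw [show (3 : MvPolynomial (Fin 5) ℚ) * b = (3 * a * c * d - 2 * a * d) * c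
            - a * (3 * c ^ 2 * d - 3 * a ^ 2 * b - 2 * c * d)
            - (3 * b) * (a ^ 3 - 1) by ring]
        exact sub_mem (sub_mem (Ideal.mul_mem_left _ _ hc) (Ideal.mul_mem_left _ _ h2))
          (Ideal.mul_mem_left _ _ ha)
      have h := Ideal.mul_mem_left _ (C (1 / 3 : ℚ)) h3b
      rwa [show (C (1 / 3 : ℚ)) * (3 * b) = b by
        rw [show (3 : MvPolynomial (Fin 5) ℚ) = C 3 by simp [map_ofNat], ← mul_assoc, ← C_mul]
        norm_num] at h
    have hd : d ^ 2 - 1 ∈ I := by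
      rw [show d ^ 2 - 1 = (-(3 * a * b)) * b + (3 * d ^ 2) * c
          - (1 - 3 * a * b ^ 2 + 3 * c * d ^ 2 - d ^ 2) by ring]
      exact sub_mem (add_mem (Ideal.mul_mem_left _ _ hb) (Ideal.mul_mem_left _ _ hc)) h3
    intro x hx
    simp only [Set.mem_insert_iff, Set.mem_singleton_iff] at hx
    rcases hx with rfl | rfl | rfl | rfl | rfl
    · exact ha
    · exact hb
    · exact hc
    · exact hd
    · exact h4
end

section
/- Let k be a field of characteristic 0 and n ≥ 1. The class in GW(k) of the Scheja–Storch bilinear form of the map k^n → k^n given by (x₁, ..., xₙ) ↦ (x₁, x₂², x₃³, ..., xₙⁿ) at the origin, i.e. of the Scheja–Storch form on k[x₁,…,xₙ]/(x₁, x₂², …, xₙⁿ), is (n!/2)ℍ when n ≡ 2 or 3 mod 4. -/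
open MvPolynomial

namespace SS12

variable {k : Type} [Field k] {n : ℕ}

/-- Exponent index type: `d i ≤ i`. -/
abbrev D (n : ℕ) := ∀ i : Fin n, Fin ((i : ℕ) + 1)

/-- The complement involution `e ↦ (i ↦ i - e i)`. -/
def sig (d : D n) : D n := fun i => ⟨(i : ℕ) - (d i : ℕ), by have := (d i).isLt; omega⟩

lemma sig_sig (d : D n) : sig (sig d) = d := by
  funext i
  have := (d i).isLt
  simp only [sig]
  ext
  simp
  omega

lemma sig_inj : Function.Injective (sig (n := n)) := fun a b h => by
  rw [← sig_sig a, h, sig_sig]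

lemma mem_span_of_big {e : Fin n → ℕ} {i : Fin n} (hi : (i : ℕ) + 1 ≤ e i) :
    (∏ j : Fin n, (X j : MvPolynomial (Fin n) k) ^ e j) ∈
      Ideal.span (Set.range fun i : Fin n => (X i : MvPolynomial (Fin n) k) ^ ((i : ℕ) + 1)) := by
  have h1 : (∏ j : Fin n, (X j : MvPolynomial (Fin n) k) ^ e j)
      = (X i) ^ ((i : ℕ) + 1) * ((X i) ^ (e i - ((i : ℕ) + 1)) *
          ∏ j ∈ Finset.univ.erase i, (X j : MvPolynomial (Fin n) k) ^ e j) := by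
    rw [← Finset.mul_prod_erase Finset.univ _ (Finset.mem_univ i), ← mul_assoc, ← pow_add]
    congr 2
    omega
  rw [h1]
  exact Ideal.mul_mem_right _ _ (Ideal.subset_span ⟨i, rfl⟩)

section Main

variable (I : Ideal (MvPolynomial (Fin n) k))

/-- Monomial basis elements of the quotient. -/
noncomputable def mon (d : D n) : MvPolynomial (Fin n) k ⧸ I :=
  Ideal.Quotient.mk I (∏ i, X i ^ (d i : ℕ))

variable
  (hI : I = Ideal.span (Set.range fun i : Fin n => (X i : MvPolynomial (Fin n) k) ^ ((i : ℕ) + 1)))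
  (η : (MvPolynomial (Fin n) k ⧸ I) →ₗ[k] k)
  (hη : ∀ e : Fin n → ℕ, (∀ i, e i ≤ (i : ℕ)) →
      η (Ideal.Quotient.mk I (∏ i : Fin n, X i ^ e i)) =
        if ∀ i : Fin n, e i = (i : ℕ) then 1 else 0)

include hI in
lemma mk_eq_zero_of_big {e : Fin n → ℕ} {i : Fin n} (hi : (i : ℕ) + 1 ≤ e i) :
    Ideal.Quotient.mk I (∏ j : Fin n, (X j : MvPolynomial (Fin n) k) ^ e j) = 0 := by
  rw [Ideal.Quotient.eq_zero_iff_mem, hI]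
  exact mem_span_of_big hi

include hI hη in
lemma eta_val (e : Fin n → ℕ) :
    η (Ideal.Quotient.mk I (∏ i : Fin n, X i ^ e i)) =
      if ∀ i : Fin n, e i = (i : ℕ) then 1 else 0 := by
  by_cases hb : ∀ i : Fin n, e i ≤ (i : ℕ)
  · exact hη e hb
  · push_neg at hb
    obtain ⟨i, hi⟩ := hb
    rw [mk_eq_zero_of_big I hI (i := i) (by omega), map_zero, if_neg]
    intro h
    exact absurd (h i) (by omega)

include hI hη in
lemma eta_mon_mul (d d' : D n) :
    η (mon I d * mon I d') = if d' = sig d then 1 else 0 := by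
  have h1 : mon I d * mon I d'
      = Ideal.Quotient.mk I (∏ i : Fin n, X i ^ ((d i : ℕ) + (d' i : ℕ))) := by
    rw [mon, mon, ← map_mul, ← Finset.prod_mul_distrib]
    congr 1
    exact Finset.prod_congr rfl fun i _ => (pow_add _ _ _).symm
  rw [h1, eta_val I hI η hη]
  by_cases h : d' = sig d
  · rw [if_pos h, if_pos]
    intro i
    subst h
    have := (d i).isLt
    simp [sig]
    omega
  · rw [if_neg h, if_neg]
    intro hc
    apply h
    funext i
    have h1 := hc i
    have := (d i).isLt
    have := (d' i).isLt
    ext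
    simp [sig]
    omega

include hI hη in
lemma mon_li : LinearIndependent k (mon (k := k) (n := n) I) := by
  rw [Fintype.linearIndependent_iff]
  intro c hc f
  have h2 := congrArg (η.comp (LinearMap.mulRight k (mon I (sig f)))) hc
  simp only [map_sum, map_smul, map_zero, LinearMap.coe_comp, Function.comp_apply,
    LinearMap.mulRight_apply] at h2
  have h3 : ∀ d : D n, η (mon I d * mon I (sig f)) = if d = f then 1 else 0 := by
    intro d
    rw [eta_mon_mul I hI η hη]
    congr 1
    simp only [eq_iff_iff]
    constructor
    · intro h; exact sig_inj h.symm
    · intro h; rw [h]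
  simp only [h3, smul_eq_mul, mul_ite, mul_one, mul_zero] at h2
  rwa [Finset.sum_ite_eq' Finset.univ f c, if_pos (Finset.mem_univ f)] at h2

include hI in
lemma mon_span : ⊤ ≤ Submodule.span k (Set.range (mon (k := k) (n := n) I)) := by
  intro q _
  obtain ⟨p, rfl⟩ := Ideal.Quotient.mk_surjective q
  rw [p.as_sum, map_sum]
  apply Submodule.sum_mem
  intro v _
  have hm : (monomial v) (coeff v p) = (coeff v p) • ∏ i : Fin n, X i ^ v i := by
    have h1 : ∏ i : Fin n, (X i : MvPolynomial (Fin n) k) ^ v i = monomial v 1 := by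
      rw [← prod_X_pow_eq_monomial]
      exact (Finset.prod_subset (Finset.subset_univ _) (fun i _ hi => by
        simp [Finsupp.notMem_support_iff.mp hi])).symm
    rw [h1, smul_monomial, smul_eq_mul, mul_one]
  have hsm : Ideal.Quotient.mk I ((coeff v p) • ∏ i : Fin n, X i ^ v i)
      = (coeff v p) • Ideal.Quotient.mk I (∏ i : Fin n, X i ^ v i) := by
    rw [← Ideal.Quotient.mkₐ_eq_mk k I]
    exact map_smul _ _ _
  rw [hm, hsm]
  apply Submodule.smul_mem
  by_cases hb : ∀ i : Fin n, v i ≤ (i : ℕ)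
  · exact Submodule.subset_span ⟨fun i => ⟨v i, by have := hb i; omega⟩, rfl⟩
  · push_neg at hb
    obtain ⟨i, hi⟩ := hb
    rw [mk_eq_zero_of_big I hI (i := i) (by omega)]
    exact Submodule.zero_mem _

/-- The monomial basis. -/
noncomputable def bas : Module.Basis (D n) k (MvPolynomial (Fin n) k ⧸ I) :=
  Module.Basis.mk (mon_li I hI η hη) (mon_span I hI)

lemma bas_apply (d : D n) : bas I hI η hη d = mon I d := by
  simp [bas, Module.Basis.mk_apply]

end Main

lemma card_D : Fintype.card (D n) = n.factorial := by
  rw [Fintype.card_pi]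
  simp only [Fintype.card_fin]
  rw [Fin.prod_univ_eq_prod_range (fun i => i + 1) n]
  exact Finset.prod_range_add_one_eq_factorial n

section Pair

variable (h2 : 1 < n)

lemma sig_one (d : D n) : ((sig d ⟨1, h2⟩ : Fin 2) : ℕ) = 1 - (d ⟨1, h2⟩ : ℕ) := by
  simp [sig]

/-- Pairing the index set by the value at coordinate 1. -/
def pairEquiv : ({d : D n // (d ⟨1, h2⟩ : ℕ) = 0} × Fin 2) ≃ D n where
  toFun := fun p => if p.2 = 0 then p.1.1 else sig p.1.1
  invFun := fun d =>
    if h0 : (d ⟨1, h2⟩ : ℕ) = 0 then (⟨d, h0⟩, 0)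
    else (⟨sig d, by rw [sig_one h2]; omega⟩, 1)
  left_inv := by
    rintro ⟨⟨d, hd⟩, j⟩
    fin_cases j
    · simp [hd]
    · have hs : ((sig d) ⟨1, h2⟩ : ℕ) = 1 := by rw [sig_one h2, hd]
      simp [hs, sig_sig]
  right_inv := by
    intro d
    by_cases h0 : (d ⟨1, h2⟩ : ℕ) = 0
    · simp [h0]
    · simp [h0, sig_sig]

lemma card_sub : Fintype.card {d : D n // (d ⟨1, h2⟩ : ℕ) = 0} = n.factorial / 2 := by
  have heven : 2 ∣ n.factorial := Nat.dvd_factorial (by norm_num) h2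
  have h1 : Fintype.card ({d : D n // (d ⟨1, h2⟩ : ℕ) = 0} × Fin 2) = Fintype.card (D n) :=
    Fintype.card_congr (pairEquiv h2)
  rw [Fintype.card_prod, Fintype.card_fin, card_D] at h1
  rw [← h1, Nat.mul_div_cancel _ (by norm_num : 0 < 2)]

end Pair

end SS12

open SS12 in
/-- Let `k` be a field of characteristic 0 and `n ≥ 1`. Consider the Artinian
algebra `Q = k[x₁,…,xₙ]/(x₁, x₂², …, xₙⁿ)` of `k`-dimension `n!` (the local algebra
of the map `(x₁,…,xₙ) ↦ (x₁, x₂², …, xₙⁿ)` at the origin; here the variable `X i`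
plays the role of `x_{i+1}`, with relation `x_{i+1}^{i+1}`). The Scheja–Storch form
is `(g, h) ↦ η(gh)` where `η` is the functional dual to the socle: on the monomial
basis `∏ xᵢ^{eᵢ}` (with `eᵢ ≤ i`) it is `1` on the socle monomial `∏ xᵢ^{i-1}` and
`0` otherwise. When `n ≡ 2` or `3 (mod 4)` (so `n!` is even and `(n!/2)·ℍ` has
rank `n!`), the class of this form in `GW(k)` is `(n!/2)·ℍ`, i.e. the form is
isometric to an orthogonal sum of `n!/2` hyperbolic planes. -/
theorem stmt_12 (k : Type) [Field k] [CharZero k] (n : ℕ) (hn : 1 ≤ n)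
    (hmod : n % 4 = 2 ∨ n % 4 = 3)
    (I : Ideal (MvPolynomial (Fin n) k))
    (hI : I = Ideal.span (Set.range fun i : Fin n => (X i : MvPolynomial (Fin n) k) ^ ((i : ℕ) + 1)))
    (η : (MvPolynomial (Fin n) k ⧸ I) →ₗ[k] k)
    (hη : ∀ e : Fin n → ℕ, (∀ i, e i ≤ (i : ℕ)) →
      η (Ideal.Quotient.mk I (∏ i : Fin n, X i ^ e i)) =
        if ∀ i : Fin n, e i = (i : ℕ) then 1 else 0) :
    ∃ eq : (MvPolynomial (Fin n) k ⧸ I) ≃ₗ[k] (Fin (n.factorial / 2) × Fin 2 → k),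
      ∀ g h : MvPolynomial (Fin n) k ⧸ I,
        η (g * h) = ∑ m : Fin (n.factorial / 2),
          (eq g (m, 0) * eq h (m, 0) - eq g (m, 1) * eq h (m, 1)) := by
  classical
  have h2 : 1 < n := by omega
  set N := n.factorial / 2 with hN
  let e0 : {d : D n // (d ⟨1, h2⟩ : ℕ) = 0} ≃ Fin N :=
    Fintype.equivFinOfCardEq (card_sub h2)
  let φ : (Fin N × Fin 2) ≃ D n :=
    (Equiv.prodCongr e0.symm (Equiv.refl (Fin 2))).trans (pairEquiv h2)
  have hφ1 : ∀ m : Fin N, φ (m, 1) = sig (φ (m, 0)) := by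
    intro m
    simp only [φ, Equiv.trans_apply, Equiv.prodCongr_apply, Equiv.coe_refl, Prod.map]
    rfl
  let bbasis := bas I hI η hη
  let c : (MvPolynomial (Fin n) k ⧸ I) ≃ₗ[k] (D n → k) := bbasis.equivFun
  let r : (D n → k) ≃ₗ[k] (Fin N × Fin 2 → k) := LinearEquiv.funCongrLeft k k φ
  let F : (Fin N × Fin 2 → k) →ₗ[k] (Fin N × Fin 2 → k) :=
    { toFun := fun v p => if p.2 = 0 then v (p.1, 0) + v (p.1, 1) / 2
        else v (p.1, 0) - v (p.1, 1) / 2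
      map_add' := by intro u v; funext p; by_cases hp : p.2 = 0 <;> simp [hp] <;> ring
      map_smul' := by intro a v; funext p; by_cases hp : p.2 = 0 <;> simp [hp] <;> ring }
  let G : (Fin N × Fin 2 → k) →ₗ[k] (Fin N × Fin 2 → k) :=
    { toFun := fun w p => if p.2 = 0 then (w (p.1, 0) + w (p.1, 1)) / 2
        else w (p.1, 0) - w (p.1, 1)
      map_add' := by intro u v; funext p; by_cases hp : p.2 = 0 <;> simp [hp] <;> ring
      map_smul' := by intro a v; funext p; by_cases hp : p.2 = 0 <;> simp [hp] <;> ring }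
  have hFG : F.comp G = LinearMap.id := by
    ext w p
    rcases p with ⟨m, j⟩
    fin_cases j <;> simp [F, G] <;> ring_nf
  have hGF : G.comp F = LinearMap.id := by
    ext w p
    rcases p with ⟨m, j⟩
    fin_cases j <;> simp [F, G] <;> ring_nf
  let ψ : (Fin N × Fin 2 → k) ≃ₗ[k] (Fin N × Fin 2 → k) := LinearEquiv.ofLinear F G hFG hGF
  refine ⟨c.trans (r.trans ψ), ?_⟩
  intro g h
  set a : D n → k := c g with ha
  set bb : D n → k := c h with hbb
  have heqg : ∀ (m : Fin N) (j : Fin 2),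
      (c.trans (r.trans ψ)) g (m, j) =
        if j = 0 then a (φ (m, 0)) + a (φ (m, 1)) / 2
        else a (φ (m, 0)) - a (φ (m, 1)) / 2 := by
    intro m j
    simp only [LinearEquiv.trans_apply, ψ, LinearEquiv.ofLinear_apply, F, LinearMap.coe_mk,
      AddHom.coe_mk, r, LinearEquiv.funCongrLeft_apply, LinearMap.funLeft_apply, ← ha]
  have heqh : ∀ (m : Fin N) (j : Fin 2),
      (c.trans (r.trans ψ)) h (m, j) =
        if j = 0 then bb (φ (m, 0)) + bb (φ (m, 1)) / 2
        else bb (φ (m, 0)) - bb (φ (m, 1)) / 2 := by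
    intro m j
    simp only [LinearEquiv.trans_apply, ψ, LinearEquiv.ofLinear_apply, F, LinearMap.coe_mk,
      AddHom.coe_mk, r, LinearEquiv.funCongrLeft_apply, LinearMap.funLeft_apply, ← hbb]
  have hg : g = ∑ d : D n, a d • mon I d := by
    conv_lhs => rw [← bbasis.sum_equivFun g]
    exact Finset.sum_congr rfl fun d _ => by rw [bas_apply]
  have hh : h = ∑ d : D n, bb d • mon I d := by
    conv_lhs => rw [← bbasis.sum_equivFun h]
    exact Finset.sum_congr rfl fun d _ => by rw [bas_apply]
  have hterm : ∀ d d' : D n, η ((a d • mon I d) * (bb d' • mon I d'))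
      = a d * (bb d' * (if d' = sig d then 1 else 0)) := by
    intro d d'
    rw [smul_mul_assoc, mul_smul_comm, map_smul, map_smul, smul_eq_mul, smul_eq_mul,
      eta_mon_mul I hI η hη]
  have hlhs : η (g * h) = ∑ d : D n, a d * bb (sig d) := by
    conv_lhs => rw [hg, hh]
    rw [Finset.sum_mul_sum, map_sum]
    refine Finset.sum_congr rfl fun d _ => ?_
    rw [map_sum]
    simp only [hterm, mul_ite, mul_one, mul_zero]
    rw [Finset.sum_ite_eq' Finset.univ (sig d) (fun d' => a d * bb d'),
      if_pos (Finset.mem_univ _)]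
  rw [hlhs, ← Equiv.sum_comp φ (fun d => a d * bb (sig d)), Fintype.sum_prod_type]
  refine Finset.sum_congr rfl fun m _ => ?_
  rw [Fin.sum_univ_two, heqg m 0, heqg m 1, heqh m 0, heqh m 1]
  have hs1 : sig (φ (m, 1)) = φ (m, 0) := by rw [hφ1, sig_sig]
  rw [hs1, ← hφ1 m]
  have hc0 : ((0 : Fin 2) = 0) = True := by simp
  have hc1 : ((1 : Fin 2) = 0) = False := by simp
  simp only [hc0, hc1, if_true, if_false]
  ring
end

section
/- Let d ≥ n ≥ 1 with d even, n ≡ 2 (mod 4), and k a field of characteristic 0. Then the class in GW(k) of the Scheja–Storch form on the Artinian local k-algebra k[w₁,…,wₙ, z₀]/(C(d,1)z₀^{d−1} + w₁, C(d,2)z₀^{d−2} + w₂², …, C(d,n)z₀^{d−n} + wₙⁿ, z₀^d) is (d·n!/2)·ℍ. -/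
/-!
Reducing `w_{i+1}^{i+1} ↦ -C(d,i+1) z₀^{d-i-1}` and `z₀^d ↦ 0` sends every monomial to a multiple
of a standard monomial `w^σ z₀^b` (`σ_i ≤ i`, `b < d`) or to zero. This reduction is well defined
on the quotient, so the `d·n!` standard monomials form a basis of it.

Give `w_{i+1}^σ` the weight `h_i·([σ > 0] + [σ = i])`, where `h_i = ⌊(d-i-1)/2⌋`, and `z₀^b` the
weight `b`. Complementing all exponents turns the weight `ω` into `N - ω` with `N` odd (`d` is
even), so exactly half of the standard monomials have weight `> N/2`. Two of them multiply to zero: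
the weights of a coordinate can only add up to more than `2h_i` if the product contains
`w_{i+1}^{i+1}`, which is worth `d-i-1 ≥ 2h_i` powers of `z₀`. They therefore span a Lagrangian
subspace for `(q, r) ↦ η(qr)`. A nondegenerate symmetric form with a Lagrangian spanned by basis
vectors `e_i` is hyperbolic: choose an isotropic family `f_i` dual to it and use `e_i ± f_i/2`.
-/

open MvPolynomial Finset

namespace LinearMap.BilinForm

variable {K V : Type*} [Field K] [AddCommGroup V] [Module K V] {B : LinearMap.BilinForm K V}

theorem apply_eq_sum_of_iIsOrtho {ι : Type*} [Fintype ι] (Γ : Module.Basis ι K V)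
    (hΓ : B.iIsOrtho Γ) (x y : V) :
    B x y = ∑ p, B (Γ p) (Γ p) * Γ.repr x p * Γ.repr y p := by
  conv_lhs => rw [← Γ.sum_repr x, ← Γ.sum_repr y]
  simp only [map_sum, map_smul, LinearMap.sum_apply, LinearMap.smul_apply, smul_eq_mul]
  refine Finset.sum_congr rfl fun p _ => ?_
  rw [Finset.sum_eq_single p (fun q _ hqp => by simp [hΓ hqp]) (by simp)]
  ring

variable [FiniteDimensional K V]

theorem exists_isotropic_dual_family [NeZero (2 : K)] (hB : B.IsSymm) (hnd : B.Nondegenerate)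
    {ι M : Type*} [Fintype ι] [DecidableEq ι] (b : Module.Basis M K V) (j : ι → M)
    (hj : j.Injective)
    (hiso : ∀ i l, B (b (j i)) (b (j l)) = 0) :
    ∃ f : ι → V, (∀ i l, B (f i) (f l) = 0) ∧
      ∀ i l, B (f i) (b (j l)) = if i = l then 1 else 0 := by
  classical
  set f' : ι → V := fun i => (B.toDual hnd).symm (b.coord (j i))
  have hf' : ∀ i l, B (f' i) (b (j l)) = if i = l then 1 else 0 := by
    intro i l
    simp [f', Finsupp.single_apply, hj.eq_iff, eq_comm]
  -- subtracting half of the Gram matrix of `f'` makes it isotropic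
  set c : ι → ι → K := fun i l => B (f' i) (f' l)
  set f : ι → V := fun i => f' i - (2⁻¹ : K) • ∑ l, c i l • b (j l)
  have hf : ∀ i l, B (f i) (b (j l)) = if i = l then 1 else 0 := by
    intro i l
    simp [f, hf', hiso]
  refine ⟨f, fun i l => ?_, hf⟩
  have h1 : B (f' l) (f i) = c l i - 2⁻¹ * c i l := by
    simp [f, hf', c]
  have h2 : B (f i) (f l) = B (f i) (f' l) - 2⁻¹ * c l i := by
    conv_lhs => rw [show f l = f' l - (2⁻¹ : K) • ∑ x, c l x • b (j x) from rfl]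
    simp [hf, mul_comm]
  rw [h2, hB.eq, h1]
  simp only [c, hB.eq (f' i)]
  field_simp
  ring

theorem exists_hyperbolic_coordinates [NeZero (2 : K)] (hB : B.IsSymm) (hnd : B.Nondegenerate)
    {ι M : Type*} [Fintype ι] (b : Module.Basis M K V) (j : ι → M) (hj : j.Injective)
    (hiso : ∀ i l, B (b (j i)) (b (j l)) = 0)
    (hdim : Module.finrank K V = 2 * Fintype.card ι) :
    ∃ e : V ≃ₗ[K] (ι × Fin 2 → K),
      ∀ x y, B x y = ∑ i, (e x (i, 0) * e y (i, 0) - e x (i, 1) * e y (i, 1)) := by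
  classical
  obtain ⟨f, hff, hfb⟩ := exists_isotropic_dual_family hB hnd b j hj hiso
  set ε : Fin 2 → K := ![1, -1]
  set u : ι × Fin 2 → V := fun p => b (j p.1) + (ε p.2 / 2) • f p.1
  have hu : ∀ p q, B (u p) (u q) = if p = q then ε p.2 else 0 := by
    rintro ⟨i, s⟩ ⟨l, t⟩
    change B (b (j i) + (ε s / 2) • f i) (b (j l) + (ε t / 2) • f l) = _
    rcases eq_or_ne i l with rfl | hil
    · fin_cases s <;> fin_cases t <;>
        simp [hiso, hff, hfb, hB.eq (b (j _)) (f _), ε] <;> field_simp <;> ring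
    · simp [hiso, hff, hfb, hB.eq (b (j _)) (f _), hil, hil.symm]
  have hortho : B.iIsOrtho u := iIsOrtho_def.2 fun p q hpq => by rw [hu, if_neg hpq]
  have hind : LinearIndependent K u :=
    linearIndependent_of_iIsOrtho hortho (fun ⟨i, s⟩ => by fin_cases s <;> simp [hu, ε])
  let Γ := basisOfLinearIndependentOfCardEqFinrank' u hind (by simp [hdim]; ring)
  refine ⟨Γ.equivFun, fun x y => ?_⟩
  have hΓ : ⇑Γ = u := coe_basisOfLinearIndependentOfCardEqFinrank' ..
  rw [apply_eq_sum_of_iIsOrtho Γ (hΓ ▸ hortho) x y, Fintype.sum_prod_type]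
  refine Finset.sum_congr rfl fun i _ => ?_
  simp [hΓ, hu, ε, Fin.sum_univ_two]
  ring

end LinearMap.BilinForm

namespace SchejaStorch

/-- `m.1 i` is the exponent of `w_{i+1} = X i.castSucc` and `m.2` that of `z₀ = X (Fin.last n)`. -/
abbrev StdExponent (n d : ℕ) := (∀ i : Fin n, Fin (i + 1)) × Fin d

noncomputable def StdExponent.toFinsupp {n d : ℕ} (m : StdExponent n d) : Fin (n + 1) →₀ ℕ :=
  Finsupp.equivFunOnFinite.symm (Fin.lastCases (m.2 : ℕ) fun i => (m.1 i : ℕ))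

@[simp]
lemma StdExponent.toFinsupp_castSucc {n d : ℕ} (m : StdExponent n d) (i : Fin n) :
    m.toFinsupp i.castSucc = m.1 i := by
  simp [StdExponent.toFinsupp]

@[simp]
lemma StdExponent.toFinsupp_last {n d : ℕ} (m : StdExponent n d) :
    m.toFinsupp (Fin.last n) = m.2 := by
  simp [StdExponent.toFinsupp]

def StdExponent.rev {n d : ℕ} (m : StdExponent n d) : StdExponent n d :=
  (fun i => (m.1 i).rev, m.2.rev)

section NormalForm

variable (k : Type*) [CommRing k] (n d : ℕ)

def wQuot (α : Fin (n + 1) →₀ ℕ) (i : Fin n) : ℕ := α i.castSucc / (i + 1)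

def zDegree (α : Fin (n + 1) →₀ ℕ) : ℕ :=
  α (Fin.last n) + ∑ i, wQuot n α i * (d - ((i : ℕ) + 1))

def nfCoeff (α : Fin (n + 1) →₀ ℕ) : k :=
  ∏ i : Fin n, (-(d.choose ((i : ℕ) + 1) : k)) ^ wQuot n α i

def nfExponent (α : Fin (n + 1) →₀ ℕ) (h : zDegree n d α < d) : StdExponent n d :=
  (fun i => ⟨α i.castSucc % (i + 1), Nat.mod_lt _ i.succ_pos⟩, ⟨zDegree n d α, h⟩)

/-- The reduction of `X^α`: each of the `wQuot n α i` factors `w_{i+1}^{i+1}` is traded for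
`-C(d,i+1) z₀^{d-i-1}`, which leaves the `z₀`-exponent `zDegree n d α`. -/
noncomputable def normalForm (α : Fin (n + 1) →₀ ℕ) : StdExponent n d → k :=
  if h : zDegree n d α < d then Pi.single (nfExponent n d α h) (nfCoeff k n d α) else 0

variable {k n d}

lemma wQuot_add_single_castSucc (α : Fin (n + 1) →₀ ℕ) (i : Fin n) :
    wQuot n (α + Finsupp.single i.castSucc ((i : ℕ) + 1)) = wQuot n α + Pi.single i 1 := by
  ext j
  rcases eq_or_ne j i with rfl | hji
  · simp [wQuot, Nat.add_div_right]
  · simp [wQuot, hji]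

lemma wQuot_add_single_last (α : Fin (n + 1) →₀ ℕ) (t : ℕ) :
    wQuot n (α + Finsupp.single (Fin.last n) t) = wQuot n α := by
  ext j
  simp [wQuot]

lemma zDegree_add_single_castSucc (α : Fin (n + 1) →₀ ℕ) (i : Fin n) :
    zDegree n d (α + Finsupp.single i.castSucc ((i : ℕ) + 1)) =
      zDegree n d α + (d - ((i : ℕ) + 1)) := by
  rw [zDegree, zDegree, wQuot_add_single_castSucc]
  simp [add_mul, Finset.sum_add_distrib, Pi.single_apply, (Fin.castSucc_lt_last i).ne']
  ring

lemma zDegree_add_single_last (α : Fin (n + 1) →₀ ℕ) (t : ℕ) :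
    zDegree n d (α + Finsupp.single (Fin.last n) t) = zDegree n d α + t := by
  rw [zDegree, zDegree, wQuot_add_single_last]
  simp
  ring

lemma nfCoeff_add_single_castSucc (α : Fin (n + 1) →₀ ℕ) (i : Fin n) :
    nfCoeff k n d (α + Finsupp.single i.castSucc ((i : ℕ) + 1)) =
      -(d.choose ((i : ℕ) + 1) : k) * nfCoeff k n d α := by
  rw [nfCoeff, nfCoeff, wQuot_add_single_castSucc]
  simp only [Pi.add_apply, pow_add, Finset.prod_mul_distrib]
  simp [Pi.single_apply, pow_ite, mul_comm]

lemma nfCoeff_add_single_last (α : Fin (n + 1) →₀ ℕ) (t : ℕ) :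
    nfCoeff k n d (α + Finsupp.single (Fin.last n) t) = nfCoeff k n d α := by
  rw [nfCoeff, nfCoeff, wQuot_add_single_last]

lemma normalForm_eq_zero {α : Fin (n + 1) →₀ ℕ} (h : d ≤ zDegree n d α) :
    normalForm k n d α = 0 :=
  dif_neg h.not_gt

lemma normalForm_add_single_castSucc (α : Fin (n + 1) →₀ ℕ) (i : Fin n) :
    normalForm k n d (α + Finsupp.single i.castSucc ((i : ℕ) + 1)) =
      -(d.choose ((i : ℕ) + 1) : k) •
        normalForm k n d (α + Finsupp.single (Fin.last n) (d - ((i : ℕ) + 1))) := by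
  by_cases h : zDegree n d α + (d - ((i : ℕ) + 1)) < d
  · have h₁ : zDegree n d (α + Finsupp.single i.castSucc ((i : ℕ) + 1)) < d := by
      rwa [zDegree_add_single_castSucc]
    have h₂ : zDegree n d (α + Finsupp.single (Fin.last n) (d - ((i : ℕ) + 1))) < d := by
      rwa [zDegree_add_single_last]
    have hexp : nfExponent n d _ h₁ = nfExponent n d _ h₂ := by
      refine Prod.ext (funext fun j => Fin.ext ?_) (Fin.ext ?_)
      · rcases eq_or_ne j i with rfl | hji
        · simp [nfExponent, Finsupp.single_apply]
        · simp [nfExponent, Finsupp.single_apply, hji.symm]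
      · simp only [nfExponent, zDegree_add_single_castSucc, zDegree_add_single_last]
    rw [normalForm, dif_pos h₁, normalForm, dif_pos h₂, hexp, nfCoeff_add_single_castSucc,
      nfCoeff_add_single_last, ← Pi.single_smul, smul_eq_mul]
  · rw [normalForm_eq_zero, normalForm_eq_zero, smul_zero]
    · rw [zDegree_add_single_last]; omega
    · rw [zDegree_add_single_castSucc]; omega

lemma le_zDegree (α : Fin (n + 1) →₀ ℕ) : α (Fin.last n) ≤ zDegree n d α :=
  Nat.le_add_right _ _

lemma zDegree_toFinsupp_add (m m' : StdExponent n d) :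
    zDegree n d (m.toFinsupp + m'.toFinsupp) =
      m.2 + m'.2 + ∑ i : Fin n, ((m.1 i : ℕ) + m'.1 i) / (i + 1) * (d - ((i : ℕ) + 1)) := by
  simp [zDegree, wQuot]

lemma normalForm_toFinsupp (m : StdExponent n d) :
    normalForm k n d m.toFinsupp = Pi.single m 1 := by
  have hq : wQuot n m.toFinsupp = 0 := by
    ext i
    simp [wQuot, Nat.div_eq_of_lt (m.1 i).isLt]
  have hz : zDegree n d m.toFinsupp = m.2 := by simp [zDegree, hq]
  have hlt : zDegree n d m.toFinsupp < d := hz ▸ m.2.isLt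
  have hexp : nfExponent n d _ hlt = m :=
    Prod.ext (funext fun i => Fin.ext (by simp [nfExponent, Nat.mod_eq_of_lt (m.1 i).isLt]))
      (Fin.ext hz)
  rw [normalForm, dif_pos hlt, hexp, nfCoeff, hq]
  simp

end NormalForm

section Weight

def halfWeight (d i : ℕ) : ℕ := (d - (i + 1)) / 2

def coordWeight (d i σ : ℕ) : ℕ :=
  halfWeight d i * ((if 0 < σ then 1 else 0) + if σ = i then 1 else 0)

def weight {n d : ℕ} (m : StdExponent n d) : ℕ := m.2 + ∑ i : Fin n, coordWeight d i (m.1 i)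

def socleWeight (n d : ℕ) : ℕ := (d - 1) + ∑ i : Fin n, 2 * halfWeight d i

def upperHalf (n d : ℕ) : Finset (StdExponent n d) := {m | socleWeight n d < 2 * weight m}

variable {n d : ℕ}

lemma mem_upperHalf {m : StdExponent n d} :
    m ∈ upperHalf n d ↔ socleWeight n d < 2 * weight m := by
  simp [upperHalf]

lemma coordWeight_add_coordWeight_sub {i σ : ℕ} (hσ : σ ≤ i) :
    coordWeight d i σ + coordWeight d i (i - σ) = 2 * halfWeight d i := by
  unfold coordWeight
  split_ifs <;> omega

lemma coordWeight_add_le {i σ σ' : ℕ} (hσ : σ ≤ i) (hσ' : σ' ≤ i) :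
    coordWeight d i σ + coordWeight d i σ' ≤
      2 * halfWeight d i + (σ + σ') / (i + 1) * (d - (i + 1)) := by
  have h2 : 2 * halfWeight d i ≤ d - (i + 1) := by unfold halfWeight; omega
  rcases Nat.lt_or_ge (σ + σ') (i + 1) with hlt | hge
  · rw [Nat.div_eq_of_lt hlt]
    unfold coordWeight
    split_ifs <;> nlinarith
  · have hq : 1 ≤ (σ + σ') / (i + 1) := (Nat.one_le_div_iff i.succ_pos).2 hge
    unfold coordWeight
    split_ifs <;> nlinarith

lemma weight_add_weight_rev (m : StdExponent n d) : weight m + weight m.rev = socleWeight n d := by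
  have hz : (m.2 : ℕ) + m.2.rev = d - 1 := by rw [Fin.val_rev]; omega
  have hw : ∑ i : Fin n, coordWeight d i (m.1 i) + ∑ i : Fin n, coordWeight d i ((m.1 i).rev) =
      ∑ i : Fin n, 2 * halfWeight d i := by
    rw [← Finset.sum_add_distrib]
    refine Finset.sum_congr rfl fun i _ => ?_
    rw [Fin.val_rev, show (i : ℕ) + 1 - (m.1 i + 1) = i - m.1 i by omega]
    exact coordWeight_add_coordWeight_sub (Nat.lt_succ_iff.1 (m.1 i).isLt)
  simp only [weight, socleWeight, StdExponent.rev]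
  omega

lemma rev_mem_upperHalf_iff (hd : Even d) (m : StdExponent n d) :
    m.rev ∈ upperHalf n d ↔ m ∉ upperHalf n d := by
  have hsum := weight_add_weight_rev m
  have hodd : socleWeight n d % 2 = 1 := by
    have := m.2.pos
    have : 2 ∣ ∑ i : Fin n, 2 * halfWeight d i := Finset.dvd_sum fun i _ => dvd_mul_right 2 _
    unfold socleWeight
    obtain ⟨r, rfl⟩ := hd
    omega
  rw [mem_upperHalf, mem_upperHalf]
  omega

lemma card_stdExponent : Fintype.card (StdExponent n d) = d * n.factorial := by
  simp [Fintype.card_pi, Fin.prod_univ_eq_prod_range (· + 1),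
    Finset.prod_range_add_one_eq_factorial, mul_comm]

lemma two_mul_card_upperHalf (hd : Even d) : 2 * #(upperHalf n d) = d * n.factorial := by
  have hrev : #(upperHalf n d) = #(upperHalf n d)ᶜ := by
    refine Finset.card_bij' (fun m _ => m.rev) (fun m _ => m.rev) ?_ ?_ ?_ ?_
    · exact fun m hm => Finset.mem_compl.2 fun h => (rev_mem_upperHalf_iff hd m).1 h hm
    · exact fun m hm => (rev_mem_upperHalf_iff hd m).2 (Finset.mem_compl.1 hm)
    all_goals intro m _; simp [StdExponent.rev]
  rw [← card_stdExponent, ← Finset.card_add_card_compl (upperHalf n d), ← hrev, two_mul]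

lemma le_zDegree_of_mem_upperHalf {m m' : StdExponent n d} (hm : m ∈ upperHalf n d)
    (hm' : m' ∈ upperHalf n d) : d ≤ zDegree n d (m.toFinsupp + m'.toFinsupp) := by
  rw [mem_upperHalf] at hm hm'
  simp only [weight, socleWeight] at hm hm'
  have hcoord := Finset.sum_le_sum fun i (_ : i ∈ Finset.univ) =>
    coordWeight_add_le (d := d) (Nat.lt_succ_iff.1 (m.1 i).isLt) (Nat.lt_succ_iff.1 (m'.1 i).isLt)
  simp only [Finset.sum_add_distrib] at hcoord
  rw [zDegree_toFinsupp_add]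
  omega

end Weight

section Algebra

variable (k : Type*) [CommRing k] (n d : ℕ)

noncomputable def relSeq : Fin (n + 1) → MvPolynomial (Fin (n + 1)) k := fun i =>
  if (i : ℕ) < n then
    C ((d.choose ((i : ℕ) + 1) : ℕ) : k) * X (Fin.last n) ^ (d - ((i : ℕ) + 1)) +
      X i ^ ((i : ℕ) + 1)
  else X (Fin.last n) ^ d

noncomputable abbrev relIdeal : Ideal (MvPolynomial (Fin (n + 1)) k) :=
  Ideal.span (Set.range (relSeq k n d))

noncomputable def nfMap : MvPolynomial (Fin (n + 1)) k →ₗ[k] (StdExponent n d → k) :=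
  (basisMonomials (Fin (n + 1)) k).constr k (normalForm k n d)

variable {k n d}

lemma relSeq_castSucc (i : Fin n) :
    relSeq k n d i.castSucc =
      C (d.choose ((i : ℕ) + 1) : k) * X (Fin.last n) ^ (d - ((i : ℕ) + 1)) +
        X i.castSucc ^ ((i : ℕ) + 1) := by
  simp [relSeq]

lemma relSeq_last : relSeq k n d (Fin.last n) = X (Fin.last n) ^ d := by
  simp [relSeq]

lemma nfMap_monomial (α : Fin (n + 1) →₀ ℕ) (c : k) :
    nfMap k n d (monomial α c) = c • normalForm k n d α := by
  have : monomial α c = c • basisMonomials (Fin (n + 1)) k α := by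
    rw [coe_basisMonomials, smul_monomial, smul_eq_mul, mul_one]
  rw [this, map_smul, nfMap, Module.Basis.constr_basis]

lemma nfMap_monomial_mul_relSeq (α : Fin (n + 1) →₀ ℕ) (c : k) (j : Fin (n + 1)) :
    nfMap k n d (monomial α c * relSeq k n d j) = 0 := by
  induction j using Fin.lastCases with
  | last =>
    rw [relSeq_last, X_pow_eq_monomial, monomial_mul, mul_one, nfMap_monomial,
      normalForm_eq_zero, smul_zero]
    exact le_trans (by simp) (le_zDegree _)
  | cast i =>
    rw [relSeq_castSucc, mul_add, X_pow_eq_monomial, X_pow_eq_monomial, C_mul_monomial,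
      monomial_mul, monomial_mul, map_add, nfMap_monomial, nfMap_monomial,
      normalForm_add_single_castSucc, smul_smul]
    simp

lemma nfMap_eq_zero_of_mem {p : MvPolynomial (Fin (n + 1)) k} (hp : p ∈ relIdeal k n d) :
    nfMap k n d p = 0 := by
  obtain ⟨c, rfl⟩ := Ideal.mem_span_range_iff_exists_fun.1 hp
  refine (map_sum _ _ _).trans (Finset.sum_eq_zero fun j _ => ?_)
  induction c j using MvPolynomial.induction_on' with
  | monomial α a => exact nfMap_monomial_mul_relSeq α a j
  | add p q hp hq => rw [add_mul, map_add, hp, hq, add_zero]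

noncomputable def stdMonomial (m : StdExponent n d) : MvPolynomial (Fin (n + 1)) k :=
  monomial m.toFinsupp 1

lemma nfMap_stdMonomial (m : StdExponent n d) :
    nfMap k n d (stdMonomial m) = Pi.single m 1 := by
  rw [stdMonomial, nfMap_monomial, normalForm_toFinsupp, one_smul]

local notation "mk" => Ideal.Quotient.mk (relIdeal k n d)

lemma mk_X_pow_castSucc (i : Fin n) :
    mk (X i.castSucc ^ ((i : ℕ) + 1)) =
      -(d.choose ((i : ℕ) + 1) : k) • mk (X (Fin.last n) ^ (d - ((i : ℕ) + 1))) := by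
  have h : mk (relSeq k n d i.castSucc) = 0 :=
    Ideal.Quotient.eq_zero_iff_mem.2 (Ideal.subset_span ⟨_, rfl⟩)
  rw [relSeq_castSucc, C_mul', map_add, ← Ideal.Quotient.mkₐ_eq_mk k, map_smul] at h
  rw [neg_smul, eq_neg_iff_add_eq_zero]
  exact (add_comm _ _).trans h

lemma mk_X_last_pow : mk (X (Fin.last n) ^ d : MvPolynomial (Fin (n + 1)) k) = 0 :=
  Ideal.Quotient.eq_zero_iff_mem.2 (relSeq_last (k := k) ▸ Ideal.subset_span ⟨_, rfl⟩)

variable (k n d) in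
noncomputable def stdCombination :
    (StdExponent n d → k) →ₗ[k] MvPolynomial (Fin (n + 1)) k ⧸ relIdeal k n d :=
  Fintype.linearCombination k fun m => mk (stdMonomial m)

lemma mk_monomial_eq (α : Fin (n + 1) →₀ ℕ) :
    mk (monomial α 1) = stdCombination k n d (normalForm k n d α) := by
  induction hN : ∑ i : Fin n, α i.castSucc using Nat.strong_induction_on generalizing α with
  | _ N ih =>
  by_cases hred : ∃ i : Fin n, (i : ℕ) + 1 ≤ α i.castSucc
  · obtain ⟨i, hi⟩ := hred
    obtain ⟨β, rfl⟩ : ∃ β, α = β + Finsupp.single i.castSucc ((i : ℕ) + 1) :=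
      ⟨_, (tsub_add_cancel_of_le (Finsupp.single_le_iff.2 hi)).symm⟩
    set γ := β + Finsupp.single (Fin.last n) (d - ((i : ℕ) + 1))
    have hlt : ∑ j : Fin n, γ j.castSucc < N := by
      subst hN
      simp [γ, Finset.sum_add_distrib, Finsupp.single_apply]
    calc mk (monomial (β + Finsupp.single i.castSucc ((i : ℕ) + 1)) 1)
        = mk (monomial β 1) * mk (X i.castSucc ^ ((i : ℕ) + 1)) := by
          rw [← map_mul, X_pow_eq_monomial, monomial_mul, one_mul]
      _ = -(d.choose ((i : ℕ) + 1) : k) • mk (monomial γ 1) := by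
          rw [mk_X_pow_castSucc, mul_smul_comm, ← map_mul, X_pow_eq_monomial, monomial_mul,
            one_mul]
      _ = stdCombination k n d
            (normalForm k n d (β + Finsupp.single i.castSucc ((i : ℕ) + 1))) := by
          rw [ih _ hlt γ rfl, normalForm_add_single_castSucc, map_smul]
  · simp only [not_exists, not_le] at hred
    by_cases hz : d ≤ α (Fin.last n)
    · obtain ⟨β, rfl⟩ : ∃ β, α = β + Finsupp.single (Fin.last n) d :=
        ⟨_, (tsub_add_cancel_of_le (Finsupp.single_le_iff.2 hz)).symm⟩
      rw [normalForm_eq_zero (hz.trans (le_zDegree _)), map_zero, ← mul_one (1 : k),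
        ← monomial_mul, ← X_pow_eq_monomial, map_mul, mk_X_last_pow, mul_zero]
    · set m : StdExponent n d :=
        (fun i => ⟨α i.castSucc, by have := hred i; omega⟩, ⟨α (Fin.last n), by omega⟩)
      have hm : m.toFinsupp = α :=
        Finsupp.ext (Fin.lastCases (by simp [m]) fun i => by simp [m])
      rw [← hm, normalForm_toFinsupp]
      simp [stdCombination, stdMonomial]

variable (k n d) in
lemma linearIndependent_mk_stdMonomial :
    LinearIndependent k fun m : StdExponent n d => mk (stdMonomial (k := k) m) := by
  rw [Fintype.linearIndependent_iff]
  intro c hc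
  have hmem : ∑ m, c m • stdMonomial m ∈ relIdeal k n d := by
    rw [← Ideal.Quotient.eq_zero_iff_mem, ← Ideal.Quotient.mkₐ_eq_mk k, map_sum]
    simpa only [map_smul, Ideal.Quotient.mkₐ_eq_mk] using hc
  have hc' := nfMap_eq_zero_of_mem hmem
  simp only [map_sum, map_smul, nfMap_stdMonomial] at hc'
  intro m
  simpa [Pi.single_apply] using congr_fun hc' m

variable (k n d) in
lemma span_mk_stdMonomial_eq_top :
    Submodule.span k (Set.range fun m : StdExponent n d => mk (stdMonomial (k := k) m)) = ⊤ := by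
  rw [← Fintype.range_linearCombination, ← stdCombination, eq_top_iff]
  rintro q -
  obtain ⟨p, rfl⟩ := Ideal.Quotient.mk_surjective q
  induction p using MvPolynomial.induction_on' with
  | monomial α c =>
    rw [← mul_one c, ← smul_eq_mul, ← smul_monomial, ← Ideal.Quotient.mkₐ_eq_mk k, map_smul,
      Ideal.Quotient.mkₐ_eq_mk, mk_monomial_eq]
    exact Submodule.smul_mem _ _ ⟨_, rfl⟩
  | add p q hp hq => rw [map_add]; exact add_mem hp hq

variable (k n d) in
noncomputable def stdBasis :
    Module.Basis (StdExponent n d) k (MvPolynomial (Fin (n + 1)) k ⧸ relIdeal k n d) :=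
  .mk (linearIndependent_mk_stdMonomial k n d) (span_mk_stdMonomial_eq_top k n d).ge

lemma stdBasis_apply (m : StdExponent n d) : stdBasis k n d m = mk (stdMonomial m) :=
  Module.Basis.mk_apply ..

lemma stdBasis_mul_stdBasis_eq_zero {m m' : StdExponent n d} (hm : m ∈ upperHalf n d)
    (hm' : m' ∈ upperHalf n d) : stdBasis k n d m * stdBasis k n d m' = 0 := by
  rw [stdBasis_apply, stdBasis_apply, ← map_mul, stdMonomial, stdMonomial, monomial_mul, mul_one,
    mk_monomial_eq, normalForm_eq_zero (le_zDegree_of_mem_upperHalf hm hm'), map_zero]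

end Algebra

end SchejaStorch

open SchejaStorch in
theorem stmt_16_general (k : Type) [Field k] [CharZero k] (n d : ℕ)
    (hd : d % 2 = 0)
    (g : Fin (n + 1) → MvPolynomial (Fin (n + 1)) k)
    (hg : g = fun i : Fin (n + 1) =>
      if hi : (i : ℕ) < n then
        C ((d.choose ((i : ℕ) + 1) : ℕ) : k) * X (Fin.last n) ^ (d - ((i : ℕ) + 1)) +
          X i ^ ((i : ℕ) + 1)
      else X (Fin.last n) ^ d)
    (I : Ideal (MvPolynomial (Fin (n + 1)) k)) (hI : I = Ideal.span (Set.range g))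
    (η : (MvPolynomial (Fin (n + 1)) k ⧸ I) →ₗ[k] k)
    (hnondeg : ∀ q : MvPolynomial (Fin (n + 1)) k ⧸ I,
      (∀ r, η (q * r) = 0) → q = 0) :
    ∃ e : (MvPolynomial (Fin (n + 1)) k ⧸ I) ≃ₗ[k] (Fin (d * n.factorial / 2) × Fin 2 → k),
      ∀ q r : MvPolynomial (Fin (n + 1)) k ⧸ I,
        η (q * r) = ∑ m : Fin (d * n.factorial / 2),
          (e q (m, 0) * e r (m, 0) - e q (m, 1) * e r (m, 1)) := by
  have hI' : I = relIdeal k n d := by rw [hI, hg]; rfl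
  subst hI'
  let B : LinearMap.BilinForm k (MvPolynomial (Fin (n + 1)) k ⧸ relIdeal k n d) :=
    (LinearMap.mul k _).compr₂ η
  have hB : B.IsSymm := ⟨fun q r => by simp [B, mul_comm]⟩
  have hBnd : B.Nondegenerate := hB.isRefl.nondegenerate_iff_separatingLeft.2 hnondeg
  have := Module.Finite.of_basis (stdBasis k n d)
  have hcard := two_mul_card_upperHalf (n := n) (Nat.even_iff.2 hd)
  let σ : Fin (d * n.factorial / 2) ≃ upperHalf n d :=
    ((upperHalf n d).equivFinOfCardEq (by omega)).symm
  obtain ⟨e, he⟩ := LinearMap.BilinForm.exists_hyperbolic_coordinates hB hBnd (stdBasis k n d)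
    (fun i => σ i) (Subtype.val_injective.comp σ.injective)
    (fun i l => by
      change η (_ * _) = 0
      rw [stdBasis_mul_stdBasis_eq_zero (σ i).2 (σ l).2, map_zero])
    (by rw [Module.finrank_eq_card_basis (stdBasis k n d), card_stdExponent, Fintype.card_fin]
        omega)
  exact ⟨e, he⟩

/-- Let `d ≥ n ≥ 1` with `d` even, `n ≡ 2 (mod 4)`, and `k` a field of
characteristic 0. Consider the Artinian local `k`-algebra
`Q = k[w₁,…,wₙ,z₀]/(C(d,1)z₀^{d-1} + w₁, …, C(d,n)z₀^{d-n} + wₙⁿ, z₀^d)`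
(of `k`-dimension `d·n!`; here `X i` for `i < n` is `w_{i+1}` and `X (Fin.last n)`
is `z₀`). The Scheja–Storch form `(g, h) ↦ η(gh)`, where `η` is the Scheja–Storch
functional — the `k`-linear functional making the form nondegenerate and sending
the class of the Jacobian determinant of the regular sequence to
`dim_k Q = d·n!` — has class `(d·n!/2)·ℍ` in `GW(k)`, i.e. it is isometric to an
orthogonal sum of `d·n!/2` hyperbolic planes. -/
theorem stmt_16 (k : Type) [Field k] [CharZero k] (n d : ℕ)
    (hn : 1 ≤ n) (hnd : n ≤ d) (hmod : n % 4 = 2) (hd : d % 2 = 0)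
    (g : Fin (n + 1) → MvPolynomial (Fin (n + 1)) k)
    (hg : g = fun i : Fin (n + 1) =>
      if hi : (i : ℕ) < n then
        C ((d.choose ((i : ℕ) + 1) : ℕ) : k) * X (Fin.last n) ^ (d - ((i : ℕ) + 1)) +
          X i ^ ((i : ℕ) + 1)
      else X (Fin.last n) ^ d)
    (I : Ideal (MvPolynomial (Fin (n + 1)) k)) (hI : I = Ideal.span (Set.range g))
    (η : (MvPolynomial (Fin (n + 1)) k ⧸ I) →ₗ[k] k)
    (hnondeg : ∀ q : MvPolynomial (Fin (n + 1)) k ⧸ I,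
      (∀ r, η (q * r) = 0) → q = 0)
    (hjac : η (Ideal.Quotient.mk I
        (Matrix.of fun i j : Fin (n + 1) => pderiv j (g i)).det) =
      ((d * n.factorial : ℕ) : k)) :
    ∃ e : (MvPolynomial (Fin (n + 1)) k ⧸ I) ≃ₗ[k] (Fin (d * n.factorial / 2) × Fin 2 → k),
      ∀ q r : MvPolynomial (Fin (n + 1)) k ⧸ I,
        η (q * r) = ∑ m : Fin (d * n.factorial / 2),
          (e q (m, 0) * e r (m, 0) - e q (m, 1) * e r (m, 1)) :=
  stmt_16_general k n d hd g hg I hI η hnondeg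
end

section
/- Let k be a field of characteristic 0 and let Q = k[x]/(xⁿ) with n ≥ 1. The bilinear form β(g,h) = coefficient of x^{n−1} in gh is nondegenerate on Q, and its class in GW(k) is (n/2)·ℍ if n is even, and ⟨1⟩ + ((n−1)/2)·ℍ if n is odd. -/
/-!
In the monomial basis `1, x, …, xⁿ⁻¹` of `Q = k[x]/(xⁿ)` the form pairs `xⁱ` with `xⁿ⁻¹⁻ⁱ`
only, so `β(q, r) = ∑ᵢ qᵢ rₙ₋₁₋ᵢ`; pairing `q` with `xⁿ⁻¹⁻ⁱ` reads off `qᵢ`, hence `β` is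
nondegenerate. For `m < n - 1 - m` the monomials `xᵐ, xⁿ⁻¹⁻ᵐ` span a hyperbolic plane,
diagonalised by the coordinates `qₘ ± qₙ₋₁₋ₘ / 2`; for odd `n` the middle monomial
`x^((n-1)/2)` is orthogonal to all of them and contributes `⟨1⟩`. Together these coordinates
form an isometry from `Q` to the diagonal form, and an isometry out of a nondegenerate space
into one of the same dimension is an isomorphism.
-/

open Polynomial Finset

lemma Finset.sum_range_eq_sum_range_add_reflect {M : Type*} [AddCommMonoid M] (f : ℕ → M)
    {n s : ℕ} (hn : n = 2 * s) :
    ∑ i ∈ range n, f i = ∑ m ∈ range s, (f m + f (n - 1 - m)) := by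
  subst hn
  rw [two_mul, sum_range_add, sum_add_distrib, ← sum_range_reflect (fun m => f (s + m))]
  exact congrArg _ (sum_congr rfl fun m hm => by rw [mem_range] at hm; congr 1; omega)

lemma Finset.sum_range_eq_add_sum_range_add_reflect {M : Type*} [AddCommMonoid M] (f : ℕ → M)
    {n s : ℕ} (hn : n = 2 * s + 1) :
    ∑ i ∈ range n, f i = f s + ∑ m ∈ range s, (f m + f (n - 1 - m)) := by
  subst hn
  rw [sum_add_distrib, show 2 * s + 1 = s + 1 + s by ring, sum_range_add, sum_range_succ,
    ← sum_range_reflect (fun m => f (s + 1 + m)), add_comm _ (f s), add_assoc]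
  exact congrArg _ (congrArg _ (sum_congr rfl fun m hm => by rw [mem_range] at hm; congr 1; omega))

lemma LinearMap.exists_linearEquiv_of_nondegenerate {k M N : Type*} [Field k]
    [AddCommGroup M] [Module k M] [FiniteDimensional k M]
    [AddCommGroup N] [Module k N] [FiniteDimensional k N]
    (B : M →ₗ[k] M →ₗ[k] k) (hB : ∀ q, (∀ r, B q r = 0) → q = 0)
    (f : M →ₗ[k] N) (C : N → N → k) (hC : ∀ y, C 0 y = 0)
    (hf : ∀ q r, B q r = C (f q) (f r)) (hdim : Module.finrank k M = Module.finrank k N) :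
    ∃ e : M ≃ₗ[k] N, ∀ q r, B q r = C (e q) (e r) := by
  have hinj : Function.Injective f := by
    refine (injective_iff_map_eq_zero f).mpr fun q hq => hB q fun r => ?_
    rw [hf, hq, hC]
  exact ⟨f.linearEquivOfInjective hinj hdim, hf⟩

namespace Polynomial

variable {k : Type*} [Field k] {n : ℕ}

noncomputable def quotCoeff (n i : ℕ) : (k[X] ⧸ Ideal.span {(X : k[X]) ^ n}) →ₗ[k] k :=
  (lcoeff k i).comp (AdjoinRoot.modByMonicHom (monic_X_pow n))

lemma quotCoeff_mk {i : ℕ} (hi : i < n) (g : k[X]) :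
    quotCoeff n i (Ideal.Quotient.mk _ g) = g.coeff i := by
  change (AdjoinRoot.modByMonicHom (monic_X_pow n) (AdjoinRoot.mk _ g)).coeff i = _
  have h := congrArg (coeff · i) (modByMonic_add_div g ((X : k[X]) ^ n))
  simpa [AdjoinRoot.modByMonicHom_mk, coeff_X_pow_mul', not_le.mpr hi] using h

noncomputable def hyperbolicCoord (n m : ℕ) (j : Fin 2) :
    (k[X] ⧸ Ideal.span {(X : k[X]) ^ n}) →ₗ[k] k :=
  quotCoeff n m + ((-1) ^ (j : ℕ) / 2 : k) • quotCoeff n (n - 1 - m)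

lemma hyperbolicCoord_mul_sub [NeZero (2 : k)] (m : ℕ)
    (q r : k[X] ⧸ Ideal.span {(X : k[X]) ^ n}) :
    hyperbolicCoord n m 0 q * hyperbolicCoord n m 0 r -
      hyperbolicCoord n m 1 q * hyperbolicCoord n m 1 r =
      quotCoeff n m q * quotCoeff n (n - 1 - m) r +
        quotCoeff n (n - 1 - m) q * quotCoeff n m r := by
  simp only [hyperbolicCoord, LinearMap.add_apply, LinearMap.smul_apply, smul_eq_mul,
    Fin.val_zero, Fin.val_one, pow_zero, pow_one]
  field_simp
  ring

noncomputable def hyperbolicCoords (n s : ℕ) :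
    (k[X] ⧸ Ideal.span {(X : k[X]) ^ n}) →ₗ[k] (Fin s × Fin 2 → k) :=
  LinearMap.pi fun p => hyperbolicCoord n p.1 p.2

noncomputable def hyperbolicCoordsWithMiddle (n s : ℕ) :
    (k[X] ⧸ Ideal.span {(X : k[X]) ^ n}) →ₗ[k] (Unit ⊕ Fin s × Fin 2 → k) :=
  LinearMap.pi <| Sum.elim (fun _ => quotCoeff n s) fun p => hyperbolicCoord n p.1 p.2

def IsTopCoeffForm (n : ℕ)
    (B : (k[X] ⧸ Ideal.span {(X : k[X]) ^ n}) →ₗ[k]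
      (k[X] ⧸ Ideal.span {(X : k[X]) ^ n}) →ₗ[k] k) : Prop :=
  ∀ g h : k[X], B (Ideal.Quotient.mk _ g) (Ideal.Quotient.mk _ h) = (g * h).coeff (n - 1)

namespace IsTopCoeffForm

variable {B : (k[X] ⧸ Ideal.span {(X : k[X]) ^ n}) →ₗ[k]
  (k[X] ⧸ Ideal.span {(X : k[X]) ^ n}) →ₗ[k] k}

lemma eq_zero_of_forall_eq_zero (hB : IsTopCoeffForm n B) {q} (hq : ∀ r, B q r = 0) :
    q = 0 := by
  obtain ⟨g, rfl⟩ := Ideal.Quotient.mk_surjective q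
  rw [Ideal.Quotient.eq_zero_iff_mem, Ideal.mem_span_singleton, X_pow_dvd_iff]
  intro i hi
  have := hq (Ideal.Quotient.mk _ (X ^ (n - 1 - i)))
  rwa [hB, coeff_mul_X_pow', if_pos (by omega), show n - 1 - (n - 1 - i) = i by omega] at this

lemma eq_sum (hB : IsTopCoeffForm n B) (hn : 1 ≤ n) (q r) :
    B q r = ∑ i ∈ range n, quotCoeff n i q * quotCoeff n (n - 1 - i) r := by
  obtain ⟨g, rfl⟩ := Ideal.Quotient.mk_surjective q
  obtain ⟨h, rfl⟩ := Ideal.Quotient.mk_surjective r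
  rw [hB, coeff_mul, Nat.sum_antidiagonal_eq_sum_range_succ_mk, Nat.succ_eq_add_one,
    Nat.sub_add_cancel hn]
  refine sum_congr rfl fun i hi => ?_
  rw [mem_range] at hi
  rw [quotCoeff_mk hi, quotCoeff_mk (by omega)]

lemma eq_sum_hyperbolicCoords [NeZero (2 : k)] (hB : IsTopCoeffForm n B) (hn : 1 ≤ n)
    {s : ℕ} (hs : n = 2 * s) (q r) :
    B q r = ∑ m : Fin s, (hyperbolicCoords n s q (m, 0) * hyperbolicCoords n s r (m, 0) -
      hyperbolicCoords n s q (m, 1) * hyperbolicCoords n s r (m, 1)) := by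
  rw [hB.eq_sum hn, sum_range_eq_sum_range_add_reflect _ hs]
  simp only [hyperbolicCoords, LinearMap.pi_apply, hyperbolicCoord_mul_sub]
  rw [Fin.sum_univ_eq_sum_range (fun m => quotCoeff n m q * quotCoeff n (n - 1 - m) r +
    quotCoeff n (n - 1 - m) q * quotCoeff n m r)]
  refine sum_congr rfl fun m hm => ?_
  rw [mem_range] at hm
  rw [show n - 1 - (n - 1 - m) = m by omega]

lemma eq_add_sum_hyperbolicCoordsWithMiddle [NeZero (2 : k)] (hB : IsTopCoeffForm n B)
    (hn : 1 ≤ n) {s : ℕ} (hs : n = 2 * s + 1) (q r) :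
    B q r =
      hyperbolicCoordsWithMiddle n s q (.inl ()) * hyperbolicCoordsWithMiddle n s r (.inl ()) +
        ∑ m : Fin s,
          (hyperbolicCoordsWithMiddle n s q (.inr (m, 0)) *
              hyperbolicCoordsWithMiddle n s r (.inr (m, 0)) -
            hyperbolicCoordsWithMiddle n s q (.inr (m, 1)) *
              hyperbolicCoordsWithMiddle n s r (.inr (m, 1))) := by
  rw [hB.eq_sum hn, sum_range_eq_add_sum_range_add_reflect _ hs]
  simp only [hyperbolicCoordsWithMiddle, LinearMap.pi_apply, Sum.elim_inl, Sum.elim_inr,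
    hyperbolicCoord_mul_sub]
  rw [Fin.sum_univ_eq_sum_range (fun m => quotCoeff n m q * quotCoeff n (n - 1 - m) r +
    quotCoeff n (n - 1 - m) q * quotCoeff n m r), show n - 1 - s = s by omega]
  refine congrArg _ (sum_congr rfl fun m hm => ?_)
  rw [mem_range] at hm
  rw [show n - 1 - (n - 1 - m) = m by omega]

end IsTopCoeffForm

end Polynomial

/-- Let `k` be a field of characteristic 0 and `Q = k[x]/(xⁿ)` with `n ≥ 1`.
The bilinear form `β(g, h) = (coefficient of x^{n-1} in gh)` (the Scheja–Storch
form of `x ↦ xⁿ` at the origin, well defined on the quotient) is nondegenerate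
on `Q`, and its class in `GW(k)` is `(n/2)·ℍ` if `n` is even and
`⟨1⟩ + ((n-1)/2)·ℍ` if `n` is odd. -/
theorem stmt_19 (k : Type) [Field k] [CharZero k] (n : ℕ) (hn : 1 ≤ n)
    (I : Ideal (Polynomial k)) (hI : I = Ideal.span {(X : Polynomial k) ^ n})
    (B : (Polynomial k ⧸ I) →ₗ[k] (Polynomial k ⧸ I) →ₗ[k] k)
    (hB : ∀ g h : Polynomial k,
      B (Ideal.Quotient.mk I g) (Ideal.Quotient.mk I h) = (g * h).coeff (n - 1)) :
    (∀ q : Polynomial k ⧸ I, (∀ r, B q r = 0) → q = 0) ∧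
    (Even n → ∃ e : (Polynomial k ⧸ I) ≃ₗ[k] (Fin (n / 2) × Fin 2 → k),
      ∀ q r, B q r = ∑ m : Fin (n / 2),
        (e q (m, 0) * e r (m, 0) - e q (m, 1) * e r (m, 1))) ∧
    (Odd n → ∃ e : (Polynomial k ⧸ I) ≃ₗ[k] (Unit ⊕ Fin ((n - 1) / 2) × Fin 2 → k),
      ∀ q r, B q r = e q (Sum.inl ()) * e r (Sum.inl ()) +
        ∑ m : Fin ((n - 1) / 2),
          (e q (Sum.inr (m, 0)) * e r (Sum.inr (m, 0)) -
           e q (Sum.inr (m, 1)) * e r (Sum.inr (m, 1)))) := by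
  subst hI
  have hβ : IsTopCoeffForm n B := hB
  have hnd : ∀ q, (∀ r, B q r = 0) → q = 0 := fun _ => hβ.eq_zero_of_forall_eq_zero
  have := (monic_X_pow (R := k) n).finite_quotient
  have hdim : Module.finrank k (k[X] ⧸ Ideal.span {(X : k[X]) ^ n}) = n := by
    rw [finrank_quotient_span_eq_natDegree, natDegree_X_pow]
  refine ⟨hnd, fun hev => ?_, fun hodd => ?_⟩
  · have hs : n = 2 * (n / 2) := (Nat.two_mul_div_two_of_even hev).symm
    exact LinearMap.exists_linearEquiv_of_nondegenerate B hnd (hyperbolicCoords n (n / 2))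
      (fun a c => ∑ m, (a (m, 0) * c (m, 0) - a (m, 1) * c (m, 1))) (fun _ => by simp)
      (hβ.eq_sum_hyperbolicCoords hn hs) (by simp [hdim]; omega)
  · have hs : n = 2 * ((n - 1) / 2) + 1 := by obtain ⟨t, rfl⟩ := hodd; omega
    exact LinearMap.exists_linearEquiv_of_nondegenerate B hnd
      (hyperbolicCoordsWithMiddle n ((n - 1) / 2))
      (fun a c => a (.inl ()) * c (.inl ()) + ∑ m, (a (.inr (m, 0)) * c (.inr (m, 0)) -
        a (.inr (m, 1)) * c (.inr (m, 1)))) (fun _ => by simp)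
      (hβ.eq_add_sum_hyperbolicCoordsWithMiddle hn hs) (by simp [hdim]; omega)
end
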